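/- arXiv:1810.07624 — 6 statements merged into one kernel-verified Lean document; each statement's English description precedes it below -/
import Mathlib

section
/- Let (X,d) be a complete metric space, α : X × X → [0,∞), Θ a Θ-function, and F : X → K(X) a continuous multivalued mapping such that: (i) F is α-admissible; (ii) there exists x₀ ∈ X and x₁ ∈ Fx₀ with α(x₀,x₁) ≥ 1; (iii) there exist k ∈ (0,1) and λ ≥ 0 such that for all x,y ∈ X with H(Fx,Fy) > 0, α(x,y)·Θ(H(Fx,Fy)) ≤ [Θ(d(x,y) + λ·D(y,Fx))]^k. Then F has a fixed point in X, i.e. there exists x* ∈ X with x* ∈ Fx*. -/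
open Filter Topology Metric Set

noncomputable section

/-- Distance between two sets: `dist(A,B) = inf {d(a,b) : a ∈ A, b ∈ B}`. -/
def SetDist {X : Type*} [MetricSpace X] (A B : Set X) : ℝ :=
  sInf {r : ℝ | ∃ a ∈ A, ∃ b ∈ B, dist a b = r}

/-- `A₀ = {a ∈ A : d(a,b) = dist(A,B) for some b ∈ B}`. -/
def ProxA {X : Type*} [MetricSpace X] (A B : Set X) : Set X :=
  {a ∈ A | ∃ b ∈ B, dist a b = SetDist A B}

/-- `B₀ = {b ∈ B : d(a,b) = dist(A,B) for some a ∈ A}`. -/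
def ProxB {X : Type*} [MetricSpace X] (A B : Set X) : Set X :=
  {b ∈ B | ∃ a ∈ A, dist a b = SetDist A B}

/-- A Θ-function: a continuous nondecreasing map `Θ : (0,∞) → (1,∞)` such that for every
sequence of positive reals `Θ(αₙ) → 1 ↔ αₙ → 0`, and there are `r ∈ (0,1)`, `l ∈ (0,∞]`
with `lim_{t→0⁺} (Θ(t)-1)/tʳ = l`. -/
def IsThetaFunction (Θ : ℝ → ℝ) : Prop :=
  ContinuousOn Θ (Set.Ioi 0) ∧
  (∀ s t : ℝ, 0 < s → s ≤ t → Θ s ≤ Θ t) ∧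
  (∀ t : ℝ, 0 < t → 1 < Θ t) ∧
  (∀ u : ℕ → ℝ, (∀ n, 0 < u n) →
    (Filter.Tendsto (fun n => Θ (u n)) Filter.atTop (nhds 1) ↔
      Filter.Tendsto u Filter.atTop (nhds 0))) ∧
  (∃ r : ℝ, 0 < r ∧ r < 1 ∧
    ((∃ l : ℝ, 0 < l ∧ Filter.Tendsto (fun t => (Θ t - 1) / t ^ r)
        (nhdsWithin 0 (Set.Ioi 0)) (nhds l)) ∨
      Filter.Tendsto (fun t => (Θ t - 1) / t ^ r)
        (nhdsWithin 0 (Set.Ioi 0)) Filter.atTop))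

/-- The pair `(A,B)` has the weak `P`-property. -/
def WeakPProperty {X : Type*} [MetricSpace X] (A B : Set X) : Prop :=
  ∀ x₁ ∈ A, ∀ x₂ ∈ A, ∀ y₁ ∈ B, ∀ y₂ ∈ B,
    dist x₁ y₁ = SetDist A B → dist x₂ y₂ = SetDist A B → dist x₁ x₂ ≤ dist y₁ y₂

/-- The pair `(A,B)` has the `P`-property. -/
def PProperty {X : Type*} [MetricSpace X] (A B : Set X) : Prop :=
  ∀ x₁ ∈ A, ∀ x₂ ∈ A, ∀ y₁ ∈ B, ∀ y₂ ∈ B,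
    dist x₁ y₁ = SetDist A B → dist x₂ y₂ = SetDist A B → dist x₁ x₂ = dist y₁ y₂

/-- A multivalued map `F : A → 2^B` is `α`-proximal admissible. -/
def MProximalAdmissible {X : Type*} [MetricSpace X] (A B : Set X)
    (α : X → X → ℝ) (F : X → Set X) : Prop :=
  ∀ x₁ ∈ A, ∀ x₂ ∈ A, ∀ u₁ ∈ A, ∀ u₂ ∈ A, ∀ y₁ ∈ F x₁, ∀ y₂ ∈ F x₂,
    1 ≤ α x₁ x₂ → dist u₁ y₁ = SetDist A B → dist u₂ y₂ = SetDist A B → 1 ≤ α u₁ u₂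

/-- A single-valued map `F : A → B` is `α`-proximal admissible. -/
def SProximalAdmissible {X : Type*} [MetricSpace X] (A B : Set X)
    (α : X → X → ℝ) (F : X → X) : Prop :=
  ∀ x₁ ∈ A, ∀ x₂ ∈ A, ∀ u₁ ∈ A, ∀ u₂ ∈ A,
    1 ≤ α x₁ x₂ → dist u₁ (F x₁) = SetDist A B → dist u₂ (F x₂) = SetDist A B → 1 ≤ α u₁ u₂

/-- Continuity of the multivalued map `F` on `A` with respect to the Hausdorff metric:
`H(Fxₙ, Fx) → 0` whenever `d(xₙ, x) → 0`. -/
def MContinuousOn {X : Type*} [MetricSpace X] (A : Set X) (F : X → Set X) : Prop :=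
  ∀ x ∈ A, ∀ u : ℕ → X, (∀ n, u n ∈ A) →
    Filter.Tendsto (fun n => dist (u n) x) Filter.atTop (nhds 0) →
    Filter.Tendsto (fun n => Metric.hausdorffDist (F (u n)) (F x)) Filter.atTop (nhds 0)

/-- The set `A` satisfies the `α`-subsequential property. -/
def AlphaSubseq {X : Type*} [MetricSpace X] (A : Set X) (α : X → X → ℝ) : Prop :=
  ∀ u : ℕ → X, (∀ n, u n ∈ A) → (∀ n, 1 ≤ α (u n) (u (n + 1))) →
    ∀ x ∈ A, Filter.Tendsto u Filter.atTop (nhds x) →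
      ∃ φ : ℕ → ℕ, StrictMono φ ∧ ∀ k, 1 ≤ α (u (φ k)) x

theorem fixed_point_multivalued_continuous {X : Type*} [MetricSpace X] [CompleteSpace X]
    (α : X → X → ℝ) (hα : ∀ x y, 0 ≤ α x y)
    (Θ : ℝ → ℝ) (hΘ : IsThetaFunction Θ)
    (F : X → Set X) (hFval : ∀ x, (F x).Nonempty ∧ IsCompact (F x))
    (hFcont : MContinuousOn Set.univ F)
    (hadm : ∀ x y, y ∈ F x → 1 ≤ α x y → ∀ z ∈ F y, 1 ≤ α y z)
    (hinit : ∃ x₀ x₁, x₁ ∈ F x₀ ∧ 1 ≤ α x₀ x₁)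
    (k lam : ℝ) (hk0 : 0 < k) (hk1 : k < 1) (hlam : 0 ≤ lam)
    (hcontr : ∀ x y, 0 < Metric.hausdorffDist (F x) (F y) →
      α x y * Θ (Metric.hausdorffDist (F x) (F y)) ≤
        Θ (dist x y + lam * Metric.infDist y (F x)) ^ k) :
    ∃ x, x ∈ F x := by
  by_contra hfix
  push_neg at hfix
  obtain ⟨x₀, x₁, hx₁, hα₁⟩ := hinit
  have hΘmono := hΘ.2.1
  have hΘgt1 := hΘ.2.2.1
  -- choice function picking a closest point in F y
  have hgex : ∀ y : X, ∃ z ∈ F y, Metric.infDist y (F y) = dist y z :=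
    fun y => (hFval y).2.exists_infDist_eq_dist (hFval y).1 y
  choose g hgmem hgdist using hgex
  set x : ℕ → X := fun n => g^[n] x₁ with hxdef
  have hxsucc : ∀ n, x (n + 1) = g (x n) := fun n => Function.iterate_succ_apply' g n x₁
  set d : ℕ → ℝ := fun n => dist (x n) (x (n + 1)) with hddef
  have hmem : ∀ n, x (n + 1) ∈ F (x n) := fun n => by rw [hxsucc]; exact hgmem (x n)
  have hdinf : ∀ n, d n = Metric.infDist (x n) (F (x n)) := by
    intro n
    show dist (x n) (x (n+1)) = _
    rw [hxsucc]
    exact (hgdist (x n)).symm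
  have hclosed : ∀ y : X, IsClosed (F y) := fun y => (hFval y).2.isClosed
  have hdpos : ∀ n, 0 < d n := by
    intro n
    rcases lt_or_eq_of_le (Metric.infDist_nonneg (x := x n) (s := F (x n))) with h | h
    · rw [hdinf n]; exact h
    · exact absurd (((hclosed (x n)).mem_iff_infDist_zero (hFval (x n)).1).2 h.symm)
        (hfix (x n))
  have hx0 : x 0 = x₁ := rfl
  have hαchain : ∀ n, 1 ≤ α (x n) (x (n + 1)) := by
    intro n
    induction n with
    | zero =>
      have := hadm x₀ x₁ hx₁ hα₁ (x 1) (by rw [← hx0]; exact hmem 0)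
      rwa [← hx0] at this
    | succ m ih => exact hadm (x m) (x (m + 1)) (hmem m) ih (x (m + 2)) (hmem (m + 1))
  have hfin : ∀ a b : X, EMetric.hausdorffEdist (F a) (F b) ≠ ⊤ := fun a b =>
    Metric.hausdorffEdist_ne_top_of_nonempty_of_bounded (hFval a).1 (hFval b).1
      (hFval a).2.isBounded (hFval b).2.isBounded
  -- the key contraction step
  have key : ∀ n, Θ (d (n + 1)) ≤ Θ (d n) ^ k := by
    intro n
    set H := Metric.hausdorffDist (F (x n)) (F (x (n + 1))) with hHdef
    have hle : d (n + 1) ≤ H := by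
      rw [hdinf (n + 1)]
      exact Metric.infDist_le_hausdorffDist_of_mem (hmem n) (hfin _ _)
    have hH : 0 < H := lt_of_lt_of_le (hdpos (n + 1)) hle
    have h1 := hcontr (x n) (x (n + 1)) hH
    have hiz : Metric.infDist (x (n + 1)) (F (x n)) = 0 :=
      Metric.infDist_zero_of_mem (hmem n)
    rw [hiz, mul_zero, add_zero] at h1
    have hΘH : (0 : ℝ) ≤ Θ H := le_of_lt (lt_trans one_pos (hΘgt1 H hH))
    calc Θ (d (n + 1)) ≤ Θ H := hΘmono _ _ (hdpos (n + 1)) hle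
      _ ≤ α (x n) (x (n + 1)) * Θ H := le_mul_of_one_le_left hΘH (hαchain n)
      _ ≤ Θ (dist (x n) (x (n + 1))) ^ k := h1
      _ = Θ (d n) ^ k := rfl
  set a : ℝ := Θ (d 0) with hadef
  have ha1 : 1 < a := hΘgt1 _ (hdpos 0)
  have ha0 : (0 : ℝ) < a := lt_trans one_pos ha1
  have hgeo : ∀ n, Θ (d n) ≤ a ^ (k ^ n) := by
    intro n
    induction n with
    | zero => simp [pow_zero, Real.rpow_one, hadef]
    | succ m ih =>
      have h1 : Θ (d (m + 1)) ≤ Θ (d m) ^ k := key m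
      have h2 : Θ (d m) ^ k ≤ (a ^ (k ^ m)) ^ k :=
        Real.rpow_le_rpow (le_of_lt (lt_trans one_pos (hΘgt1 _ (hdpos m)))) ih hk0.le
      have h3 : (a ^ (k ^ m)) ^ k = a ^ (k ^ (m + 1)) := by
        rw [← Real.rpow_mul ha0.le, ← pow_succ]
      exact le_trans h1 (h2.trans_eq h3)
  -- Θ (d n) → 1, hence d n → 0
  have hkpow : Filter.Tendsto (fun n : ℕ => k ^ n) Filter.atTop (nhds 0) :=
    tendsto_pow_atTop_nhds_zero_of_lt_one hk0.le hk1
  have hupper : Filter.Tendsto (fun n : ℕ => a ^ (k ^ n)) Filter.atTop (nhds 1) := by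
    have hcont : ContinuousAt (fun t : ℝ => a ^ t) 0 := Real.continuousAt_const_rpow ha0.ne'
    have := hcont.tendsto.comp hkpow
    simpa [Real.rpow_zero, Function.comp_def] using this
  have hΘtend : Filter.Tendsto (fun n => Θ (d n)) Filter.atTop (nhds 1) := by
    apply tendsto_of_tendsto_of_tendsto_of_le_of_le tendsto_const_nhds hupper
    · exact fun n => (hΘgt1 _ (hdpos n)).le
    · exact fun n => hgeo n
  have hd0 : Filter.Tendsto d Filter.atTop (nhds 0) := (hΘ.2.2.2.1 d hdpos).1 hΘtend
  -- extract the rpow lower bound near 0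
  obtain ⟨r, hr0, hr1, hcase⟩ := hΘ.2.2.2.2
  have hlow : ∃ c : ℝ, 0 < c ∧ ∃ δ : ℝ, 0 < δ ∧
      ∀ t : ℝ, 0 < t → t < δ → c * t ^ r ≤ Θ t - 1 := by
    have hev : ∃ c : ℝ, 0 < c ∧ ∀ᶠ t in nhdsWithin 0 (Set.Ioi 0), c ≤ (Θ t - 1) / t ^ r := by
      rcases hcase with ⟨l, hl0, hl⟩ | hl
      · exact ⟨l / 2, by linarith, hl.eventually (eventually_ge_nhds (by linarith))⟩
      · exact ⟨1, one_pos, hl.eventually_ge_atTop 1⟩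
    obtain ⟨c, hc0, hev⟩ := hev
    obtain ⟨u, hu, hsub⟩ := mem_nhdsGT_iff_exists_Ioo_subset.1 hev
    refine ⟨c, hc0, u, hu, fun t ht htu => ?_⟩
    have := hsub ⟨ht, htu⟩
    calc c * t ^ r ≤ ((Θ t - 1) / t ^ r) * t ^ r := by
          apply mul_le_mul_of_nonneg_right this (Real.rpow_nonneg ht.le r)
      _ = Θ t - 1 := div_mul_cancel₀ _ (ne_of_gt (Real.rpow_pos_of_pos ht r))
  obtain ⟨c, hc0, δ, hδ0, hbound⟩ := hlow
  obtain ⟨N, hN⟩ := Filter.eventually_atTop.1 (hd0.eventually (eventually_lt_nhds hδ0))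
  -- geometric bound on d n for n ≥ N
  set q : ℝ := k ^ (1 / r) with hqdef
  have hq0 : 0 < q := Real.rpow_pos_of_pos hk0 _
  have hq1 : q < 1 := Real.rpow_lt_one hk0.le hk1 (by positivity)
  set M : ℝ := ((a - 1) / c) ^ (1 / r) with hMdef
  have hM0 : 0 ≤ M := Real.rpow_nonneg (div_nonneg (by linarith) hc0.le) _
  have hdbound : ∀ n, N ≤ n → d n ≤ M * q ^ n := by
    intro n hn
    have h1 : c * (d n) ^ r ≤ Θ (d n) - 1 := hbound (d n) (hdpos n) (hN n hn)
    have h2 : Θ (d n) - 1 ≤ k ^ n * (a - 1) := by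
      have hb : a ^ (k ^ n) ≤ 1 + k ^ n * (a - 1) := by
        have := rpow_one_add_le_one_add_mul_self (s := a - 1) (by linarith)
          (p := k ^ n) (by positivity) (pow_le_one₀ hk0.le hk1.le)
        simpa using this
      have := hgeo n
      linarith
    have h3 : (d n) ^ r ≤ k ^ n * ((a - 1) / c) := by
      rw [← mul_div_assoc]
      exact (le_div_iff₀' hc0).2 (h1.trans h2)
    have hdn : d n = ((d n) ^ r) ^ (1 / r) := by
      rw [← Real.rpow_mul (hdpos n).le, mul_one_div, div_self hr0.ne', Real.rpow_one]
    have hkq : ((k : ℝ) ^ n) ^ (1 / r) = q ^ n := by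
      rw [← Real.rpow_natCast k n, ← Real.rpow_mul hk0.le, mul_comm (n : ℝ) (1 / r),
        Real.rpow_mul hk0.le, Real.rpow_natCast]
    calc d n = ((d n) ^ r) ^ (1 / r) := hdn
      _ ≤ (k ^ n * ((a - 1) / c)) ^ (1 / r) :=
          Real.rpow_le_rpow (Real.rpow_nonneg (hdpos n).le r) h3 (by positivity)
      _ = (k ^ n) ^ (1 / r) * ((a - 1) / c) ^ (1 / r) :=
          Real.mul_rpow (by positivity) (div_nonneg (by linarith) hc0.le)
      _ = q ^ n * M := by rw [hkq]
      _ = M * q ^ n := mul_comm _ _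
  -- summability and Cauchy
  have hsum : Summable d := by
    rw [← summable_nat_add_iff N]
    apply Summable.of_nonneg_of_le (fun n => dist_nonneg) (fun n => ?_)
      ((summable_geometric_of_lt_one hq0.le hq1).mul_left (M * q ^ N))
    calc d (n + N) ≤ M * q ^ (n + N) := hdbound (n + N) (Nat.le_add_left N n)
      _ = (M * q ^ N) * q ^ n := by rw [pow_add]; ring
  have hcauchy : CauchySeq x := cauchySeq_of_dist_le_of_summable d (fun n => le_rfl) hsum
  obtain ⟨p, hp⟩ := cauchySeq_tendsto_of_complete hcauchy
  have hdist : Filter.Tendsto (fun n => dist (x n) p) Filter.atTop (nhds 0) :=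
    tendsto_iff_dist_tendsto_zero.1 hp
  have hHtend : Filter.Tendsto (fun n => Metric.hausdorffDist (F (x n)) (F p))
      Filter.atTop (nhds 0) := hFcont p (Set.mem_univ p) x (fun n => Set.mem_univ _) hdist
  have hb : ∀ n, Metric.infDist p (F p) ≤
      dist (x (n + 1)) p + Metric.hausdorffDist (F (x n)) (F p) := by
    intro n
    calc Metric.infDist p (F p)
        ≤ Metric.infDist (x (n + 1)) (F p) + dist p (x (n + 1)) :=
          Metric.infDist_le_infDist_add_dist
      _ ≤ Metric.hausdorffDist (F (x n)) (F p) + dist p (x (n + 1)) :=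
          add_le_add (Metric.infDist_le_hausdorffDist_of_mem (hmem n) (hfin _ _)) le_rfl
      _ = dist (x (n + 1)) p + Metric.hausdorffDist (F (x n)) (F p) := by
          rw [dist_comm]; ring
  have hrhs : Filter.Tendsto
      (fun n => dist (x (n + 1)) p + Metric.hausdorffDist (F (x n)) (F p))
      Filter.atTop (nhds 0) := by
    have h1 : Filter.Tendsto (fun n => dist (x (n + 1)) p) Filter.atTop (nhds 0) :=
      hdist.comp (Filter.tendsto_add_atTop_nat 1)
    simpa using h1.add hHtend
  have hle0 : Metric.infDist p (F p) ≤ 0 := ge_of_tendsto' hrhs hb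
  have hpz : Metric.infDist p (F p) = 0 := le_antisymm hle0 Metric.infDist_nonneg
  exact hfix p (((hclosed p).mem_iff_infDist_zero (hFval p).1).2 hpz)
end
end

section
/- Let (X,d) be a complete metric space, α : X × X → [0,∞), Θ a Θ-function, and F : X → K(X) a multivalued mapping such that: (i) F is α-admissible; (ii) there exists x₀ ∈ X and x₁ ∈ Fx₀ with α(x₀,x₁) ≥ 1; (iii) there exist k ∈ (0,1) and λ ≥ 0 such that for all x,y ∈ X with H(Fx,Fy) > 0, α(x,y)·Θ(H(Fx,Fy)) ≤ [Θ(d(x,y) + λ·D(y,Fx))]^k. If X satisfies the α-subsequential property, then F has a fixed point in X. -/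
open Filter Topology Metric Set

noncomputable section

theorem fixed_point_multivalued_subsequential {X : Type*} [MetricSpace X] [CompleteSpace X]
    (α : X → X → ℝ) (hα : ∀ x y, 0 ≤ α x y)
    (Θ : ℝ → ℝ) (hΘ : IsThetaFunction Θ)
    (F : X → Set X) (hFval : ∀ x, (F x).Nonempty ∧ IsCompact (F x))
    (hsub : AlphaSubseq Set.univ α)
    (hadm : ∀ x y, y ∈ F x → 1 ≤ α x y → ∀ z ∈ F y, 1 ≤ α y z)
    (hinit : ∃ x₀ x₁, x₁ ∈ F x₀ ∧ 1 ≤ α x₀ x₁)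
    (k lam : ℝ) (hk0 : 0 < k) (hk1 : k < 1) (hlam : 0 ≤ lam)
    (hcontr : ∀ x y, 0 < Metric.hausdorffDist (F x) (F y) →
      α x y * Θ (Metric.hausdorffDist (F x) (F y)) ≤
        Θ (dist x y + lam * Metric.infDist y (F x)) ^ k) :
    ∃ x, x ∈ F x := by
  by_contra hfix
  push_neg at hfix
  obtain ⟨x₀, x₁, hx₁, hα₀⟩ := hinit
  obtain ⟨hΘc, hΘmono, hΘgt, hΘseq, r, hr0, hr1, hΘr⟩ := hΘ
  have hne : ∀ x : X, (F x).Nonempty := fun x => (hFval x).1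
  have hcpt : ∀ x : X, IsCompact (F x) := fun x => (hFval x).2
  have hcl : ∀ x : X, IsClosed (F x) := fun x => (hcpt x).isClosed
  have hfin : ∀ x y : X, EMetric.hausdorffEdist (F x) (F y) ≠ ⊤ := fun x y =>
    Metric.hausdorffEdist_ne_top_of_nonempty_of_bounded (hne x) (hne y)
      (hcpt x).isBounded (hcpt y).isBounded
  have hnext : ∀ y : X, ∃ z ∈ F y, Metric.infDist y (F y) = dist y z := fun y =>
    (hcpt y).exists_infDist_eq_dist (hne y) y
  choose next hnextMem hnextDist using hnext
  set v : ℕ → X := fun n => Nat.rec x₀ (fun m p => if m = 0 then x₁ else next p) n with hvdef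
  have hv2 : ∀ n : ℕ, v (n + 2) = next (v (n + 1)) := fun n => if_neg (Nat.succ_ne_zero n)
  have hmem : ∀ n : ℕ, v (n + 1) ∈ F (v n) := by
    intro n
    cases n with
    | zero => exact hx₁
    | succ m => rw [hv2 m]; exact hnextMem (v (m + 1))
  have hdd : ∀ n : ℕ, dist (v (n + 1)) (v (n + 2)) = Metric.infDist (v (n + 1)) (F (v (n + 1))) := by
    intro n; rw [hv2 n]; exact (hnextDist (v (n + 1))).symm
  have hac : ∀ n : ℕ, 1 ≤ α (v n) (v (n + 1)) := by
    intro n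
    induction n with
    | zero => exact hα₀
    | succ m ih => exact hadm (v m) (v (m + 1)) (hmem m) ih (v (m + 2)) (hmem (m + 1))
  have hd : ∀ n : ℕ, 0 < dist (v n) (v (n + 1)) := by
    intro n
    rcases lt_or_eq_of_le (dist_nonneg (x := v n) (y := v (n + 1))) with h | h
    · exact h
    · exfalso
      have h' : v n = v (n + 1) := dist_eq_zero.mp h.symm
      have h2 := hmem n
      rw [h'] at h2
      exact hfix _ h2
  have hH : ∀ n : ℕ, 0 < Metric.hausdorffDist (F (v n)) (F (v (n + 1))) := by
    intro n
    rcases lt_or_eq_of_le (Metric.hausdorffDist_nonneg (s := F (v n)) (t := F (v (n + 1)))) with h | h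
    · exact h
    · exfalso
      have heq : F (v n) = F (v (n + 1)) :=
        ((hcl (v n)).hausdorffDist_zero_iff_eq (hcl (v (n + 1))) (hfin _ _)).mp h.symm
      have h2 := hmem n
      rw [heq] at h2
      exact hfix _ h2
  -- key contraction estimate along the sequence
  have key : ∀ n : ℕ, Θ (dist (v (n + 1)) (v (n + 2))) ≤ Θ (dist (v n) (v (n + 1))) ^ k := by
    intro n
    have h1 : dist (v (n + 1)) (v (n + 2)) ≤ Metric.hausdorffDist (F (v n)) (F (v (n + 1))) := by
      rw [hdd n]
      exact Metric.infDist_le_hausdorffDist_of_mem (hmem n) (hfin _ _)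
    have h2 : Θ (dist (v (n + 1)) (v (n + 2))) ≤
        Θ (Metric.hausdorffDist (F (v n)) (F (v (n + 1)))) := hΘmono _ _ (hd (n + 1)) h1
    have h3 : Θ (Metric.hausdorffDist (F (v n)) (F (v (n + 1)))) ≤
        α (v n) (v (n + 1)) * Θ (Metric.hausdorffDist (F (v n)) (F (v (n + 1)))) :=
      le_mul_of_one_le_left (le_of_lt (lt_trans one_pos (hΘgt _ (hH n)))) (hac n)
    have h4 := hcontr (v n) (v (n + 1)) (hH n)
    rw [Metric.infDist_zero_of_mem (hmem n)] at h4
    simpa using h2.trans (h3.trans h4)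
  set a : ℝ := Θ (dist (v 0) (v 1)) with hadef
  have ha1 : 1 < a := hΘgt _ (hd 0)
  have ha0 : (0:ℝ) < a := lt_trans one_pos ha1
  have geom : ∀ n : ℕ, Θ (dist (v n) (v (n + 1))) ≤ a ^ ((k : ℝ) ^ n) := by
    intro n
    induction n with
    | zero => rw [pow_zero, Real.rpow_one]; exact le_refl _
    | succ m ih =>
      calc Θ (dist (v (m + 1)) (v (m + 2))) ≤ Θ (dist (v m) (v (m + 1))) ^ k := key m
        _ ≤ (a ^ ((k : ℝ) ^ m)) ^ k :=
            Real.rpow_le_rpow (le_of_lt (lt_trans one_pos (hΘgt _ (hd m)))) ih hk0.le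
        _ = a ^ ((k : ℝ) ^ (m + 1)) := by
            rw [← Real.rpow_mul ha0.le, pow_succ]
  have tend1 : Filter.Tendsto (fun n => a ^ ((k : ℝ) ^ n)) Filter.atTop (nhds 1) := by
    have hkpow : Filter.Tendsto (fun n : ℕ => (k : ℝ) ^ n) Filter.atTop (nhds 0) :=
      tendsto_pow_atTop_nhds_zero_of_lt_one hk0.le hk1
    have := Filter.Tendsto.rpow (tendsto_const_nhds (x := a)) hkpow (Or.inl ha0.ne')
    simpa using this
  have tendΘ : Filter.Tendsto (fun n => Θ (dist (v n) (v (n + 1)))) Filter.atTop (nhds 1) :=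
    tendsto_of_tendsto_of_tendsto_of_le_of_le tendsto_const_nhds tend1
      (fun n => (hΘgt _ (hd n)).le) geom
  have tendd : Filter.Tendsto (fun n => dist (v n) (v (n + 1))) Filter.atTop (nhds 0) :=
    (hΘseq _ (fun n => hd n)).mp tendΘ
  -- lower bound on Θ near 0
  obtain ⟨c, hc, ε, hε, hlow⟩ : ∃ c > (0:ℝ), ∃ ε > (0:ℝ), ∀ t : ℝ, 0 < t → t < ε →
      c * t ^ r ≤ Θ t - 1 := by
    rcases hΘr with ⟨l, hl, hlim⟩ | hlim
    · have h2 : ∀ᶠ t in nhdsWithin 0 (Set.Ioi 0), l / 2 < (Θ t - 1) / t ^ r :=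
        hlim.eventually (eventually_gt_nhds (half_lt_self hl))
      rw [eventually_nhdsWithin_iff, Metric.eventually_nhds_iff] at h2
      obtain ⟨ε, hε, hh⟩ := h2
      refine ⟨l / 2, half_pos hl, ε, hε, fun t ht htε => ?_⟩
      have := hh (y := t) (by rw [Real.dist_eq, sub_zero, abs_of_pos ht]; exact htε) ht
      have htr : (0:ℝ) < t ^ r := Real.rpow_pos_of_pos ht r
      rw [lt_div_iff₀ htr] at this
      linarith
    · have h2 : ∀ᶠ t in nhdsWithin 0 (Set.Ioi 0), (1:ℝ) ≤ (Θ t - 1) / t ^ r :=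
        hlim.eventually (Filter.eventually_ge_atTop 1)
      rw [eventually_nhdsWithin_iff, Metric.eventually_nhds_iff] at h2
      obtain ⟨ε, hε, hh⟩ := h2
      refine ⟨1, one_pos, ε, hε, fun t ht htε => ?_⟩
      have := hh (y := t) (by rw [Real.dist_eq, sub_zero, abs_of_pos ht]; exact htε) ht
      have htr : (0:ℝ) < t ^ r := Real.rpow_pos_of_pos ht r
      rw [le_div_iff₀ htr] at this
      linarith
  -- eventually geometric bound on the distances
  obtain ⟨N, hN⟩ : ∃ N : ℕ, ∀ n ≥ N, dist (v n) (v (n + 1)) < ε := by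
    obtain ⟨N, hN⟩ := (Metric.tendsto_atTop).mp tendd ε hε
    exact ⟨N, fun n hn => by
      have := hN n hn
      rwa [Real.dist_eq, sub_zero, abs_of_nonneg dist_nonneg] at this⟩
  set B : ℝ := Real.log a * a / c with hBdef
  have hB0 : 0 ≤ B := div_nonneg (mul_nonneg (Real.log_nonneg ha1.le) ha0.le) hc.le
  set q : ℝ := k ^ (1 / r) with hqdef
  have hq0 : 0 < q := Real.rpow_pos_of_pos hk0 _
  have hq1 : q < 1 := Real.rpow_lt_one hk0.le hk1 (by positivity)
  set M : ℝ := B ^ (1 / r) with hMdef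
  have hM0 : 0 ≤ M := Real.rpow_nonneg hB0 _
  have hbound : ∀ n ≥ N, dist (v n) (v (n + 1)) ≤ M * q ^ n := by
    intro n hn
    have hdn := hd n
    have h1 : c * dist (v n) (v (n + 1)) ^ r ≤ Θ (dist (v n) (v (n + 1))) - 1 :=
      hlow _ hdn (hN n hn)
    -- a ^ (k^n) - 1 ≤ k^n * log a * a
    have h2 : a ^ ((k : ℝ) ^ n) - 1 ≤ (k : ℝ) ^ n * Real.log a * a := by
      set y : ℝ := (k : ℝ) ^ n * Real.log a with hydef
      have hy0 : 0 ≤ y := mul_nonneg (pow_nonneg hk0.le n) (Real.log_nonneg ha1.le)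
      have hyle : y ≤ Real.log a := by
        have : (k : ℝ) ^ n ≤ 1 := pow_le_one₀ hk0.le hk1.le
        nlinarith [Real.log_nonneg ha1.le]
      have hrw : a ^ ((k : ℝ) ^ n) = Real.exp y := by
        rw [Real.rpow_def_of_pos ha0, hydef]; ring_nf
      have hE : Real.exp y - 1 ≤ y * Real.exp y := by
        have h := Real.add_one_le_exp (-y)
        rw [Real.exp_neg] at h
        have hEpos := Real.exp_pos y
        have h' := mul_le_mul_of_nonneg_right h hEpos.le
        rw [inv_mul_cancel₀ hEpos.ne'] at h'
        nlinarith
      have hEa : Real.exp y ≤ a := by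
        calc Real.exp y ≤ Real.exp (Real.log a) := Real.exp_le_exp.mpr hyle
          _ = a := Real.exp_log ha0
      rw [hrw]
      calc Real.exp y - 1 ≤ y * Real.exp y := hE
        _ ≤ y * a := mul_le_mul_of_nonneg_left hEa hy0
        _ = (k : ℝ) ^ n * Real.log a * a := by rw [hydef]
    have h3 : dist (v n) (v (n + 1)) ^ r ≤ B * (k : ℝ) ^ n := by
      have h23 : c * dist (v n) (v (n + 1)) ^ r ≤ (k : ℝ) ^ n * Real.log a * a := by
        linarith [geom n, h2, h1]
      rw [hBdef, div_mul_eq_mul_div, le_div_iff₀ hc]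
      nlinarith
    -- apply x ↦ x^(1/r)
    have h4 : dist (v n) (v (n + 1)) ≤ (B * (k : ℝ) ^ n) ^ (1 / r) := by
      have := Real.rpow_le_rpow (Real.rpow_nonneg dist_nonneg r) h3 (by positivity : (0:ℝ) ≤ 1 / r)
      rwa [← Real.rpow_mul dist_nonneg, mul_one_div, div_self hr0.ne', Real.rpow_one] at this
    have h5 : (B * (k : ℝ) ^ n) ^ (1 / r) = M * q ^ n := by
      rw [Real.mul_rpow hB0 (pow_nonneg hk0.le n), hMdef, hqdef]
      congr 1
      rw [← Real.rpow_natCast k n, ← Real.rpow_natCast (k ^ (1 / r)) n,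
        ← Real.rpow_mul hk0.le, ← Real.rpow_mul hk0.le, mul_comm]
    rw [← h5]; exact h4
  -- the sequence is Cauchy
  have hsum : Summable (fun n => dist (v n) (v (n + 1))) := by
    rw [← summable_nat_add_iff N]
    have hgeo : Summable (fun n : ℕ => (M * q ^ N) * q ^ n) :=
      (summable_geometric_of_lt_one hq0.le hq1).mul_left _
    refine Summable.of_nonneg_of_le (fun n => dist_nonneg) (fun n => ?_) hgeo
    calc dist (v (n + N)) (v (n + N + 1)) ≤ M * q ^ (n + N) := hbound (n + N) (Nat.le_add_left _ _)
      _ = M * q ^ N * q ^ n := by rw [pow_add]; ring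
  have hcauchy : CauchySeq v := cauchySeq_of_summable_dist hsum
  obtain ⟨x, hx⟩ := cauchySeq_tendsto_of_complete hcauchy
  obtain ⟨φ, hφ, hαφ⟩ := hsub v (fun n => Set.mem_univ _) hac x (Set.mem_univ x) hx
  -- δ > 0 since x is not a fixed point
  set δ : ℝ := Metric.infDist x (F x) with hδdef
  have hδ : 0 < δ := by
    rcases lt_or_eq_of_le (Metric.infDist_nonneg (x := x) (s := F x)) with h | h
    · exact h
    · exact absurd (((hcl x).mem_iff_infDist_zero (hne x)).mpr h.symm) (hfix x)
  have hΘδ : 1 < Θ (δ / 2) := hΘgt _ (half_pos hδ)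
  -- find ε₀ > 0 with Θ ε₀ < Θ (δ/2)
  obtain ⟨ε₀, hε₀, hΘε₀⟩ : ∃ ε₀ > (0:ℝ), Θ ε₀ < Θ (δ / 2) := by
    have hu : ∀ n : ℕ, (0:ℝ) < 1 / (n + 1) := fun n => by positivity
    have hu0 : Filter.Tendsto (fun n : ℕ => (1:ℝ) / (n + 1)) Filter.atTop (nhds 0) :=
      tendsto_one_div_add_atTop_nhds_zero_nat
    have hΘu := (hΘseq _ hu).mpr hu0
    obtain ⟨n₀, hn₀⟩ := (hΘu.eventually (eventually_lt_nhds hΘδ)).exists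
    exact ⟨1 / (n₀ + 1), hu n₀, hn₀⟩
  -- pick an index far along the subsequence
  rw [Metric.tendsto_atTop] at hx
  set ρ : ℝ := min (δ / 2) (ε₀ / (2 * (1 + lam))) with hρdef
  have hρ0 : 0 < ρ := lt_min (half_pos hδ) (by positivity)
  obtain ⟨N₁, hN₁⟩ := hx ρ hρ0
  have hφN : N₁ ≤ φ N₁ := hφ.le_apply
  have hA : dist (v (φ N₁)) x < ρ := hN₁ _ hφN
  have hB2 : dist (v (φ N₁ + 1)) x < ρ := hN₁ _ (le_trans hφN (Nat.le_succ _))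
  set ε' : ℝ := dist (v (φ N₁)) x + lam * Metric.infDist x (F (v (φ N₁))) with hε'def
  have hinf : Metric.infDist x (F (v (φ N₁))) ≤ dist x (v (φ N₁ + 1)) :=
    Metric.infDist_le_dist_of_mem (hmem (φ N₁))
  have hε'le : ε' ≤ ε₀ := by
    have h1 : ρ ≤ ε₀ / (2 * (1 + lam)) := min_le_right _ _
    have h2 : dist x (v (φ N₁ + 1)) < ρ := by rwa [dist_comm]
    have h3 : ε' ≤ ρ + lam * ρ := by
      have := mul_le_mul_of_nonneg_left (le_of_lt (lt_of_le_of_lt hinf h2)) hlam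
      rw [hε'def]; linarith
    have h4 : ρ * (1 + lam) ≤ ε₀ / 2 := by
      have h6 := (le_div_iff₀ (by positivity : (0:ℝ) < 2 * (1 + lam))).mp h1
      have h7 : ρ * (2 * (1 + lam)) = 2 * (ρ * (1 + lam)) := by ring
      linarith [h7 ▸ h6]
    have h8 : ρ + lam * ρ = ρ * (1 + lam) := by ring
    linarith
  set HN : ℝ := Metric.hausdorffDist (F (v (φ N₁))) (F x) with hHNdef
  have hHN : δ / 2 ≤ HN := by
    have h1 : δ ≤ Metric.infDist (v (φ N₁ + 1)) (F x) + dist x (v (φ N₁ + 1)) :=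
      Metric.infDist_le_infDist_add_dist
    have h2 : Metric.infDist (v (φ N₁ + 1)) (F x) ≤ HN :=
      Metric.infDist_le_hausdorffDist_of_mem (hmem (φ N₁)) (hfin _ _)
    have h3 : dist x (v (φ N₁ + 1)) < ρ := by rwa [dist_comm]
    have h4 : ρ ≤ δ / 2 := min_le_left _ _
    linarith
  have hHN0 : 0 < HN := lt_of_lt_of_le (half_pos hδ) hHN
  have hε'0 : 0 < ε' := by
    rcases (dist_nonneg (x := v (φ N₁)) (y := x)).lt_or_eq with h | h
    · have h2 := mul_nonneg hlam (Metric.infDist_nonneg (x := x) (s := F (v (φ N₁))))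
      rw [hε'def]
      linarith
    · exfalso
      have hvx : v (φ N₁) = x := dist_eq_zero.mp h.symm
      rw [hHNdef, hvx] at hHN0
      simp [Metric.hausdorffDist_self_zero] at hHN0
  -- final contradiction
  have hcon := hcontr (v (φ N₁)) x hHN0
  have hchain : Θ (δ / 2) < Θ (δ / 2) := by
    calc Θ (δ / 2) ≤ Θ HN := hΘmono _ _ (half_pos hδ) hHN
      _ ≤ α (v (φ N₁)) x * Θ HN :=
          le_mul_of_one_le_left (le_of_lt (lt_trans one_pos (hΘgt _ hHN0))) (hαφ N₁)
      _ ≤ Θ ε' ^ k := hcon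
      _ ≤ Θ ε' ^ (1:ℝ) := Real.rpow_le_rpow_of_exponent_le (hΘgt _ hε'0).le hk1.le
      _ = Θ ε' := Real.rpow_one _
      _ ≤ Θ ε₀ := hΘmono _ _ hε'0 hε'le
      _ < Θ (δ / 2) := hΘε₀
  exact absurd hchain (lt_irrefl _)
end
end

section
/- Let (X,d) be a complete metric space, α : X × X → [0,∞), Θ a Θ-function, and F : X → X a continuous mapping such that: (i) F is α-admissible; (ii) there exists x₀ ∈ X with α(x₀,Fx₀) ≥ 1; (iii) there exist k ∈ (0,1) and λ ≥ 0 such that for all x,y ∈ X with d(Fx,Fy) > 0, α(x,y)·Θ(d(Fx,Fy)) ≤ [Θ(d(x,y) + λ·d(y,Fx))]^k. Then F has a fixed point in X, i.e. there exists x* ∈ X with Fx* = x*. -/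
open Filter Topology Metric Set

noncomputable section

theorem fixed_point_single_continuous {X : Type*} [MetricSpace X] [CompleteSpace X]
    (α : X → X → ℝ) (hα : ∀ x y, 0 ≤ α x y)
    (Θ : ℝ → ℝ) (hΘ : IsThetaFunction Θ)
    (F : X → X)
    (hFcont : Continuous F)
    (hadm : ∀ x y : X, 1 ≤ α x y → 1 ≤ α (F x) (F y))
    (hinit : ∃ x₀ : X, 1 ≤ α x₀ (F x₀))
    (k lam : ℝ) (hk0 : 0 < k) (hk1 : k < 1) (hlam : 0 ≤ lam)
    (hcontr : ∀ x y : X, 0 < dist (F x) (F y) →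
      α x y * Θ (dist (F x) (F y)) ≤ Θ (dist x y + lam * dist y (F x)) ^ k) :
    ∃ x : X, F x = x := by
  obtain ⟨x₀, hx₀⟩ := hinit
  set u : ℕ → X := fun n => F^[n] x₀ with hu
  have hsucc : ∀ n, u (n + 1) = F (u n) := fun n => Function.iterate_succ_apply' F n x₀
  set d : ℕ → ℝ := fun n => dist (u n) (u (n + 1)) with hd
  -- trivial case: some step has zero distance
  by_cases hzero : ∃ n, d n = 0
  · obtain ⟨n, hn⟩ := hzero
    refine ⟨u n, ?_⟩
    have : u (n+1) = u n := by rw [← dist_eq_zero]; rw [dist_comm]; exact hn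
    rw [← hsucc n] at *; exact this
  push_neg at hzero
  have hdpos : ∀ n, 0 < d n := fun n => (dist_nonneg).lt_of_ne' (hzero n)
  have halpha : ∀ n, 1 ≤ α (u n) (u (n + 1)) := by
    intro n
    induction n with
    | zero => simpa [hu] using hx₀
    | succ m ih => rw [hsucc, hsucc]; exact hadm _ _ ih
  obtain ⟨hΘcont, hΘmono, hΘgt1, hΘiff, r, hr0, hr1, hΘr⟩ := hΘ
  -- key contraction step
  have key : ∀ n, Θ (d (n + 1)) ≤ Θ (d n) ^ k := by
    intro n
    have hpos : 0 < dist (F (u n)) (F (u (n + 1))) := by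
      rw [← hsucc, ← hsucc]; exact hdpos (n + 1)
    have h := hcontr (u n) (u (n + 1)) hpos
    rw [← hsucc n, ← hsucc (n+1)] at h
    simp only [dist_self, mul_zero, add_zero] at h
    calc Θ (d (n + 1)) = 1 * Θ (d (n + 1)) := (one_mul _).symm
      _ ≤ α (u n) (u (n+1)) * Θ (d (n + 1)) := by
          apply mul_le_mul_of_nonneg_right (halpha n) (le_of_lt (lt_trans one_pos (hΘgt1 _ (hdpos _))))
      _ ≤ Θ (d n) ^ k := h
  set c := Θ (d 0) with hc
  have hc1 : 1 < c := hΘgt1 _ (hdpos 0)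
  have hc0 : (0:ℝ) < c := lt_trans one_pos hc1
  have hbound : ∀ n, Θ (d n) ≤ c ^ (k ^ n) := by
    intro n
    induction n with
    | zero => simp [hc]
    | succ m ih =>
      calc Θ (d (m + 1)) ≤ Θ (d m) ^ k := key m
        _ ≤ (c ^ (k ^ m)) ^ k := by
            apply Real.rpow_le_rpow (le_of_lt (lt_trans one_pos (hΘgt1 _ (hdpos m)))) ih hk0.le
        _ = c ^ (k ^ (m + 1)) := by
            rw [← Real.rpow_mul hc0.le, ← pow_succ]
  -- c ^ (k^n) tends to 1
  have hklim : Tendsto (fun n : ℕ => k ^ n) atTop (𝓝 0) :=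
    tendsto_pow_atTop_nhds_zero_of_lt_one hk0.le hk1
  have hcklim : Tendsto (fun n : ℕ => c ^ (k ^ n)) atTop (𝓝 1) := by
    have : Tendsto (fun n : ℕ => Real.exp (k ^ n * Real.log c)) atTop (𝓝 1) := by
      have h1 : Tendsto (fun n : ℕ => k ^ n * Real.log c) atTop (𝓝 0) := by
        simpa using hklim.mul_const (Real.log c)
      simpa [Function.comp_def] using (Real.continuous_exp.tendsto 0).comp h1
    refine this.congr fun n => ?_
    rw [Real.rpow_def_of_pos hc0, mul_comm]
  -- Θ (d n) → 1, hence d n → 0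
  have hΘd : Tendsto (fun n => Θ (d n)) atTop (𝓝 1) := by
    refine tendsto_of_tendsto_of_tendsto_of_le_of_le tendsto_const_nhds hcklim
      (fun n => (hΘgt1 _ (hdpos n)).le) (fun n => hbound n)
  have hd0 : Tendsto d atTop (𝓝 0) := (hΘiff d hdpos).mp hΘd
  -- get B > 0 with B ≤ (Θ t - 1)/t^r near 0⁺
  obtain ⟨B, hB, hev⟩ : ∃ B : ℝ, 0 < B ∧ ∀ᶠ t in 𝓝[>] (0:ℝ), B ≤ (Θ t - 1) / t ^ r := by
    rcases hΘr with ⟨l, hl, hlt⟩ | hlt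
    · exact ⟨l / 2, by linarith, hlt.eventually (eventually_ge_nhds (by linarith))⟩
    · exact ⟨1, one_pos, hlt.eventually (eventually_ge_atTop 1)⟩
  have hd0' : Tendsto d atTop (𝓝[>] (0:ℝ)) :=
    tendsto_nhdsWithin_of_tendsto_nhds_of_eventually_within d hd0
      (Eventually.of_forall fun n => hdpos n)
  -- c^(k^n) - 1 ≤ k^n * (c - 1)
  have hconv : ∀ n : ℕ, c ^ (k ^ n) - 1 ≤ k ^ n * (c - 1) := by
    intro n
    have hs0 : (0:ℝ) ≤ k ^ n := pow_nonneg hk0.le n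
    have hs1 : k ^ n ≤ 1 := pow_le_one₀ hk0.le hk1.le
    have hb0 : (0:ℝ) ≤ 1 - k ^ n := by linarith
    have hab : k ^ n + (1 - k ^ n) = 1 := by ring
    have := convexOn_exp.2 (Set.mem_univ (Real.log c)) (Set.mem_univ (0:ℝ)) hs0 hb0 hab
    simp only [smul_eq_mul, mul_zero, add_zero, Real.exp_zero, Real.exp_log hc0] at this
    rw [Real.rpow_def_of_pos hc0, mul_comm]
    nlinarith
  set q : ℝ := k ^ (1/r : ℝ) with hq
  have hq0 : 0 < q := Real.rpow_pos_of_pos hk0 _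
  have hq1 : q < 1 := Real.rpow_lt_one hk0.le hk1 (by positivity)
  set C : ℝ := ((c - 1) / B) ^ (1/r : ℝ) with hC
  have hCB : (0:ℝ) ≤ (c - 1) / B := div_nonneg (by linarith) hB.le
  have hC0 : 0 ≤ C := Real.rpow_nonneg hCB _
  -- eventually d n ≤ C * q ^ n
  have hgeo : ∀ᶠ n in atTop, d n ≤ C * q ^ n := by
    filter_upwards [hd0'.eventually hev] with n hn
    have hdr : (0:ℝ) < d n ^ (r:ℝ) := Real.rpow_pos_of_pos (hdpos n) _
    have h1 : B * d n ^ (r:ℝ) ≤ Θ (d n) - 1 := by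
      rw [le_div_iff₀ hdr] at hn; linarith
    have h2 : d n ^ (r:ℝ) ≤ k ^ n * ((c - 1) / B) := by
      have h3 : Θ (d n) - 1 ≤ k ^ n * (c - 1) := by
        have := hbound n; have := hconv n; linarith
      calc d n ^ (r:ℝ) ≤ (Θ (d n) - 1) / B := (le_div_iff₀' hB).mpr h1
        _ ≤ k ^ n * (c - 1) / B := by gcongr
        _ = k ^ n * ((c - 1) / B) := by ring
    have h4 : d n = (d n ^ (r:ℝ)) ^ (1/r : ℝ) := by
      rw [← Real.rpow_mul (hdpos n).le, mul_one_div_cancel hr0.ne', Real.rpow_one]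
    rw [h4]
    calc (d n ^ (r:ℝ)) ^ (1/r:ℝ) ≤ (k ^ n * ((c - 1) / B)) ^ (1/r:ℝ) :=
          Real.rpow_le_rpow hdr.le h2 (by positivity)
      _ = (k ^ n : ℝ) ^ (1/r:ℝ) * C := Real.mul_rpow (pow_nonneg hk0.le n) hCB
      _ = q ^ n * C := by
          rw [← Real.rpow_natCast k n, ← Real.rpow_mul hk0.le, mul_comm (n:ℝ),
            Real.rpow_mul hk0.le, Real.rpow_natCast]
      _ = C * q ^ n := mul_comm _ _
  obtain ⟨N, hN⟩ := eventually_atTop.mp hgeo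
  -- the shifted sequence is Cauchy
  have hcau : CauchySeq u := by
    rw [← cauchySeq_shift N]
    apply cauchySeq_of_le_geometric q (C * q ^ N) hq1
    intro n
    have : d (n + N) ≤ C * q ^ (n + N) := hN _ (Nat.le_add_left N n)
    calc dist (u (n + N)) (u (n + 1 + N)) = d (n + N) := by
          rw [show n + 1 + N = n + N + 1 from by omega]
      _ ≤ C * q ^ (n + N) := this
      _ = C * q ^ N * q ^ n := by rw [pow_add]; ring
  obtain ⟨p, hp⟩ := cauchySeq_tendsto_of_complete hcau
  refine ⟨p, ?_⟩
  have h1 : Tendsto (fun n => u (n + 1)) atTop (𝓝 p) :=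
    hp.comp (tendsto_add_atTop_nat 1)
  have h2 : Tendsto (fun n => F (u n)) atTop (𝓝 (F p)) :=
    (hFcont.tendsto p).comp hp
  have h3 : (fun n => u (n + 1)) = fun n => F (u n) := funext hsucc
  rw [h3] at h1
  exact tendsto_nhds_unique h2 h1
end
end

section
/- Let (X,d) be a complete metric space, α : X × X → [0,∞), Θ a Θ-function, and F : X → X a mapping such that: (i) F is α-admissible; (ii) there exists x₀ ∈ X with α(x₀,Fx₀) ≥ 1; (iii) there exist k ∈ (0,1) and λ ≥ 0 such that for all x,y ∈ X with d(Fx,Fy) > 0, α(x,y)·Θ(d(Fx,Fy)) ≤ [Θ(d(x,y) + λ·d(y,Fx))]^k. If X satisfies the α-subsequential property, then F has a fixed point in X. -/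
open Filter Topology Metric Set

noncomputable section

theorem fixed_point_single_subsequential {X : Type*} [MetricSpace X] [CompleteSpace X]
    (α : X → X → ℝ) (hα : ∀ x y, 0 ≤ α x y)
    (Θ : ℝ → ℝ) (hΘ : IsThetaFunction Θ)
    (F : X → X)
    (hsub : AlphaSubseq Set.univ α)
    (hadm : ∀ x y : X, 1 ≤ α x y → 1 ≤ α (F x) (F y))
    (hinit : ∃ x₀ : X, 1 ≤ α x₀ (F x₀))
    (k lam : ℝ) (hk0 : 0 < k) (hk1 : k < 1) (hlam : 0 ≤ lam)
    (hcontr : ∀ x y : X, 0 < dist (F x) (F y) →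
      α x y * Θ (dist (F x) (F y)) ≤ Θ (dist x y + lam * dist y (F x)) ^ k) :
    ∃ x : X, F x = x := by
  classical
  obtain ⟨hΘc, hΘmono, hΘgt, hΘseq, r, hr0, hr1, hΘlim⟩ := hΘ
  obtain ⟨x₀, hx₀⟩ := hinit
  set x : ℕ → X := fun n => F^[n] x₀ with hxdef
  have hxs : ∀ n, x (n + 1) = F (x n) := fun n => Function.iterate_succ_apply' F n x₀
  by_cases hdeg : ∃ n, F (x n) = x n
  · obtain ⟨n, hn⟩ := hdeg; exact ⟨x n, hn⟩
  push_neg at hdeg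
  set d : ℕ → ℝ := fun n => dist (x n) (x (n + 1)) with hddef
  have hdpos : ∀ n, 0 < d n := by
    intro n
    have h : x (n + 1) ≠ x n := by rw [hxs]; exact hdeg n
    simpa [hddef, dist_pos] using h.symm
  have hchain : ∀ n, 1 ≤ α (x n) (x (n + 1)) := by
    intro n; induction n with
    | zero => simpa [hxdef] using hx₀
    | succ m ih => rw [hxs, hxs]; exact hadm _ _ ih
  have hΘdpos : ∀ n, 1 < Θ (d n) := fun n => hΘgt _ (hdpos n)
  have hstep : ∀ n, Θ (d (n + 1)) ≤ Θ (d n) ^ k := by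
    intro n
    have heq : dist (F (x n)) (F (x (n + 1))) = d (n + 1) := by
      rw [← hxs, ← hxs]
    have hpos : 0 < dist (F (x n)) (F (x (n + 1))) := heq ▸ hdpos (n + 1)
    have h := hcontr (x n) (x (n + 1)) hpos
    have hy : dist (x (n + 1)) (F (x n)) = 0 := by rw [← hxs]; simp
    rw [hy, heq] at h
    simp only [mul_zero, add_zero] at h
    have hΘnn : (0 : ℝ) ≤ Θ (d (n + 1)) := le_of_lt (lt_trans one_pos (hΘdpos (n + 1)))
    calc Θ (d (n + 1)) = 1 * Θ (d (n + 1)) := (one_mul _).symm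
      _ ≤ α (x n) (x (n + 1)) * Θ (d (n + 1)) :=
        mul_le_mul_of_nonneg_right (hchain n) hΘnn
      _ ≤ Θ (d n) ^ k := h
  set a : ℝ := Θ (d 0) with hadef
  have ha1 : 1 < a := hΘdpos 0
  have ha0 : 0 < a := lt_trans one_pos ha1
  have hiter : ∀ n, Θ (d n) ≤ a ^ (k ^ n) := by
    intro n; induction n with
    | zero => simp [hadef]
    | succ m ih =>
      have h1 : Θ (d (m + 1)) ≤ Θ (d m) ^ k := hstep m
      have h2 : Θ (d m) ^ k ≤ (a ^ (k ^ m)) ^ k :=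
        Real.rpow_le_rpow (le_of_lt (lt_trans one_pos (hΘdpos m))) ih hk0.le
      have h3 : (a ^ (k ^ m)) ^ k = a ^ (k ^ (m + 1)) := by
        rw [← Real.rpow_mul ha0.le, pow_succ]
      linarith [h3 ▸ h2]
  -- d n → 0
  have hd0 : Tendsto d atTop (𝓝 0) := by
    have hexp : Tendsto (fun n : ℕ => k ^ n * Real.log a) atTop (𝓝 0) := by
      simpa using (tendsto_pow_atTop_nhds_zero_of_lt_one hk0.le hk1).mul_const (Real.log a)
    have hb : Tendsto (fun n : ℕ => a ^ (k ^ n)) atTop (𝓝 1) := by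
      have := (Real.continuous_exp.tendsto 0).comp hexp
      simp only [Function.comp_def, Real.exp_zero] at this
      refine this.congr fun n => ?_
      rw [Real.rpow_def_of_pos ha0, mul_comm]
    have hΘd1 : Tendsto (fun n => Θ (d n)) atTop (𝓝 1) :=
      tendsto_of_tendsto_of_tendsto_of_le_of_le tendsto_const_nhds hb
        (fun n => (hΘdpos n).le) hiter
    exact (hΘseq d hdpos).mp hΘd1
  -- lower bound near zero
  obtain ⟨c, hc, hev⟩ : ∃ c > (0:ℝ), ∀ᶠ t in 𝓝[>] (0:ℝ), c ≤ (Θ t - 1) / t ^ r := by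
    rcases hΘlim with ⟨l, hl, hlim⟩ | hlim
    · exact ⟨l / 2, by positivity, hlim.eventually (eventually_ge_nhds (by linarith))⟩
    · exact ⟨1, one_pos, hlim.eventually_ge_atTop 1⟩
  obtain ⟨δ, hδ0, hδ⟩ : ∃ δ > (0:ℝ), ∀ t, 0 < t → t < δ → c * t ^ r ≤ Θ t - 1 := by
    have hev2 : ∀ᶠ t in 𝓝[>] (0:ℝ), c * t ^ r ≤ Θ t - 1 := by
      filter_upwards [hev, self_mem_nhdsWithin] with t ht ht0
      exact (le_div_iff₀ (Real.rpow_pos_of_pos ht0 r)).mp ht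
    rcases mem_nhdsGT_iff_exists_Ioo_subset.mp hev2 with ⟨u, hu, hsu⟩
    exact ⟨u, hu, fun t h1 h2 => hsu ⟨h1, h2⟩⟩
  -- upper bound
  set C : ℝ := a * Real.log a with hCdef
  have hupper : ∀ n, Θ (d n) - 1 ≤ C * k ^ n := by
    intro n
    have hkn1 : k ^ n ≤ 1 := pow_le_one₀ hk0.le hk1.le
    have h1 : Θ (d n) ≤ a := by
      calc Θ (d n) ≤ a ^ (k ^ n) := hiter n
        _ ≤ a ^ (1:ℝ) := Real.rpow_le_rpow_of_exponent_le ha1.le hkn1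
        _ = a := Real.rpow_one a
    have ht0 : (0:ℝ) < Θ (d n) := lt_trans one_pos (hΘdpos n)
    have h2 : Real.log (Θ (d n)) ≤ k ^ n * Real.log a := by
      calc Real.log (Θ (d n)) ≤ Real.log (a ^ (k ^ n)) :=
            Real.log_le_log ht0 (hiter n)
        _ = k ^ n * Real.log a := Real.log_rpow ha0 _
    have hlog : 1 - (Θ (d n))⁻¹ ≤ Real.log (Θ (d n)) := by
      have h := Real.log_le_sub_one_of_pos (inv_pos.mpr ht0)
      rw [Real.log_inv] at h; linarith
    have h3 : Θ (d n) - 1 ≤ Θ (d n) * Real.log (Θ (d n)) := by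
      have := mul_le_mul_of_nonneg_left hlog ht0.le
      rw [mul_sub, mul_one, mul_inv_cancel₀ ht0.ne'] at this
      linarith
    have h4 : Θ (d n) * Real.log (Θ (d n)) ≤ a * (k ^ n * Real.log a) := by
      have hlognn : 0 ≤ Real.log (Θ (d n)) := Real.log_nonneg (hΘdpos n).le
      exact mul_le_mul h1 h2 hlognn ha0.le
    calc Θ (d n) - 1 ≤ a * (k ^ n * Real.log a) := le_trans h3 h4
      _ = C * k ^ n := by ring
  -- geometric decay
  set q : ℝ := k ^ (1 / r) with hqdef
  have hq0 : 0 < q := Real.rpow_pos_of_pos hk0 _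
  have hq1 : q < 1 := Real.rpow_lt_one hk0.le hk1 (by positivity)
  set M : ℝ := (C / c) ^ (1 / r) with hMdef
  obtain ⟨N, hN⟩ : ∃ N, ∀ n ≥ N, d n < δ :=
    eventually_atTop.mp (hd0.eventually (eventually_lt_nhds hδ0))
  have hgeo : ∀ n ≥ N, d n ≤ M * q ^ n := by
    intro n hn
    have h1 : c * (d n) ^ r ≤ C * k ^ n :=
      le_trans (hδ (d n) (hdpos n) (hN n hn)) (hupper n)
    have h2 : (d n) ^ r ≤ (C / c) * k ^ n := by
      rw [div_mul_eq_mul_div, le_div_iff₀ hc, mul_comm]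
      exact h1
    have hrinv : 0 ≤ 1 / r := by positivity
    have h3 : ((d n) ^ r) ^ (1 / r) ≤ ((C / c) * k ^ n) ^ (1 / r) :=
      Real.rpow_le_rpow (Real.rpow_nonneg (hdpos n).le r) h2 hrinv
    have h4 : ((d n) ^ r) ^ (1 / r) = d n := by
      rw [← Real.rpow_mul (hdpos n).le, mul_one_div_cancel hr0.ne', Real.rpow_one]
    have hCc : (0:ℝ) ≤ C / c :=
      div_nonneg (mul_nonneg ha0.le (Real.log_nonneg ha1.le)) hc.le
    have hkq : ((k:ℝ) ^ n) ^ (1 / r) = q ^ n := by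
      rw [← Real.rpow_natCast k n, ← Real.rpow_mul hk0.le, mul_comm,
        Real.rpow_mul hk0.le, Real.rpow_natCast]
    have h5 : ((C / c) * k ^ n) ^ (1 / r) = M * q ^ n := by
      rw [Real.mul_rpow hCc (pow_nonneg hk0.le n), hkq]
    rw [h4, h5] at h3
    exact h3
  have hanti : Antitone d := by
    refine antitone_nat_of_succ_le fun n => ?_
    by_contra hlt
    push_neg at hlt
    have h1 : Θ (d n) ≤ Θ (d (n + 1)) := hΘmono _ _ (hdpos n) hlt.le
    have h2 : Θ (d n) ^ k < Θ (d n) ^ (1:ℝ) :=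
      Real.rpow_lt_rpow_of_exponent_lt (hΘdpos n) hk1
    rw [Real.rpow_one] at h2
    linarith [hstep n]
  set C' : ℝ := max M (d 0 / q ^ N) with hC'def
  have hbound : ∀ n, d n ≤ C' * q ^ n := by
    intro n
    rcases le_or_gt N n with hn | hn
    · exact le_trans (hgeo n hn)
        (mul_le_mul_of_nonneg_right (le_max_left _ _) (pow_nonneg hq0.le n))
    · have h1 : d n ≤ d 0 := hanti (Nat.zero_le n)
      have h2 : q ^ N ≤ q ^ n := pow_le_pow_of_le_one hq0.le hq1.le hn.le
      have h3 : d 0 ≤ (d 0 / q ^ N) * q ^ n := by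
        rw [div_mul_eq_mul_div, le_div_iff₀ (pow_pos hq0 N)]
        exact mul_le_mul_of_nonneg_left h2 (hdpos 0).le
      calc d n ≤ (d 0 / q ^ N) * q ^ n := le_trans h1 h3
        _ ≤ C' * q ^ n := mul_le_mul_of_nonneg_right (le_max_right _ _)
            (pow_nonneg hq0.le n)
  have hcauchy : CauchySeq x := cauchySeq_of_le_geometric q C' hq1 hbound
  obtain ⟨z, hz⟩ := cauchySeq_tendsto_of_complete hcauchy
  obtain ⟨φ, hφmono, hφα⟩ :=
    hsub x (fun _ => mem_univ _) hchain z (mem_univ z) hz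
  refine ⟨z, ?_⟩
  by_contra hFz
  have hε : 0 < dist z (F z) := dist_pos.mpr fun h => hFz (h.symm)
  set ε : ℝ := dist z (F z) with hεdef
  have hsub1 : Tendsto (fun j => x (φ j)) atTop (𝓝 z) :=
    hz.comp hφmono.tendsto_atTop
  have hsub2 : Tendsto (fun j => x (φ j + 1)) atTop (𝓝 z) :=
    hz.comp (tendsto_atTop_mono (fun j => Nat.le_succ (φ j)) hφmono.tendsto_atTop)
  set t : ℕ → ℝ := fun j => dist (x (φ j)) z + lam * dist z (x (φ j + 1)) with htdef
  have ht0 : Tendsto t atTop (𝓝 0) := by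
    have h1 : Tendsto (fun j => dist (x (φ j)) z) atTop (𝓝 0) :=
      tendsto_iff_dist_tendsto_zero.mp hsub1
    have h2 : Tendsto (fun j => dist z (x (φ j + 1))) atTop (𝓝 0) := by
      have := tendsto_iff_dist_tendsto_zero.mp hsub2
      refine this.congr fun j => dist_comm _ _
    have := h1.add (h2.const_mul lam)
    simpa using this
  set u : ℕ → ℝ := fun j => max (t j) ((1/2 : ℝ) ^ j) with hudef
  have hupos : ∀ j, 0 < u j := fun j =>
    lt_of_lt_of_le (pow_pos (by norm_num) j) (le_max_right _ _)
  have hu0 : Tendsto u atTop (𝓝 0) := by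
    have h2 : Tendsto (fun j : ℕ => (1/2 : ℝ) ^ j) atTop (𝓝 0) :=
      tendsto_pow_atTop_nhds_zero_of_lt_one (by norm_num) (by norm_num)
    have h3 := ht0.max h2
    rw [max_self] at h3
    exact h3
  have hΘu : Tendsto (fun j => Θ (u j)) atTop (𝓝 1) := (hΘseq u hupos).mpr hu0
  have hΘuk : Tendsto (fun j => Θ (u j) ^ k) atTop (𝓝 1) := by
    have := hΘu.rpow_const (p := k) (Or.inr hk0.le)
    simpa using this
  have key : ∀ᶠ j in atTop, Θ (ε / 2) ≤ Θ (u j) ^ k := by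
    have hev3 : ∀ᶠ j in atTop, dist (x (φ j + 1)) z < ε / 2 := by
      have := tendsto_iff_dist_tendsto_zero.mp hsub2
      exact this.eventually (eventually_lt_nhds (by positivity))
    filter_upwards [hev3] with j hj
    have htri : ε ≤ dist z (x (φ j + 1)) + dist (x (φ j + 1)) (F z) :=
      dist_triangle z (x (φ j + 1)) (F z)
    have hd2 : ε / 2 ≤ dist (x (φ j + 1)) (F z) := by
      rw [dist_comm z] at htri; linarith
    have hpos2 : 0 < dist (F (x (φ j))) (F z) := by
      rw [← hxs]; linarith [hε]
    have hco := hcontr (x (φ j)) z hpos2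
    rw [← hxs (φ j)] at hco
    have htj_pos : 0 < t j := by
      rcases (lt_or_eq_of_le (by positivity : (0:ℝ) ≤ t j)) with h | h
      · exact h
      · exfalso
        have h1 : dist (x (φ j)) z = 0 := by
          have hnn1 : 0 ≤ dist (x (φ j)) z := dist_nonneg
          have hnn2 : 0 ≤ lam * dist z (x (φ j + 1)) :=
            mul_nonneg hlam dist_nonneg
          simp only [htdef] at h
          linarith
        have hxz : x (φ j) = z := dist_eq_zero.mp h1
        rw [hxz] at hpos2
        simp at hpos2
    have h5 : Θ (ε / 2) ≤ Θ (dist (x (φ j + 1)) (F z)) :=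
      hΘmono _ _ (by positivity) hd2
    have hΘnn : 0 ≤ Θ (dist (x (φ j + 1)) (F z)) := by
      have := hΘgt _ (lt_of_lt_of_le (by positivity : (0:ℝ) < ε/2) hd2)
      linarith
    have h6 : Θ (dist (x (φ j + 1)) (F z)) ≤
        α (x (φ j)) z * Θ (dist (x (φ j + 1)) (F z)) :=
      le_mul_of_one_le_left hΘnn (hφα j)
    have h7 : Θ (t j) ≤ Θ (u j) := hΘmono _ _ htj_pos (le_max_left _ _)
    have h8 : Θ (t j) ^ k ≤ Θ (u j) ^ k :=
      Real.rpow_le_rpow (le_of_lt (lt_trans one_pos (hΘgt _ htj_pos))) h7 hk0.le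
    have hco' : α (x (φ j)) z * Θ (dist (x (φ j + 1)) (F z)) ≤ Θ (t j) ^ k := hco
    linarith
  have hfinal : Θ (ε / 2) ≤ 1 := ge_of_tendsto hΘuk key
  have := hΘgt (ε / 2) (by positivity)
  linarith
end
end

section
/- Let f : [0,1] × ℝ → ℝ be continuous and φ : ℝ × ℝ → ℝ a function. Define the operator F on C([0,1]) by (Fx)(t) = ∫₀¹ G(t,s) f(s,x(s)) ds, where G is the Green function G(t,s) = t(1−s) for 0 ≤ t ≤ s ≤ 1 and G(t,s) = s(1−t) for 0 ≤ s ≤ t ≤ 1. Assume: (i) |f(t,a) − f(t,b)| ≤ |a − b| for all t ∈ [0,1] and all a,b ∈ ℝ with φ(a,b) ≥ 0; (ii) there exists x₀ ∈ C([0,1]) with φ(x₀(t), (Fx₀)(t)) ≥ 0 for all t ∈ [0,1]; (iii) for all x,y ∈ C([0,1]), if φ(x(t),y(t)) ≥ 0 for all t ∈ [0,1] then φ((Fx)(t),(Fy)(t)) ≥ 0 for all t ∈ [0,1]; (iv) if (xₙ) is a sequence in C([0,1]) converging uniformly to x with φ(xₙ(t),xₙ₊₁(t)) ≥ 0 for all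 n and t, then φ(xₙ(t),x(t)) ≥ 0 for all n and t. Then the two-point boundary value problem −x''(t) = f(t,x(t)) on [0,1] with x(0) = x(1) = 0 has a solution x ∈ C²([0,1]); equivalently, F has a fixed point in C([0,1]). -/
open Filter Topology Set MeasureTheory intervalIntegral

noncomputable section

/-- The Green function of the BVP `-x'' = f(t,x)`, `x(0) = x(1) = 0`:
`G(t,s) = t(1-s)` if `t ≤ s` and `G(t,s) = s(1-t)` if `s ≤ t`. -/
def GreenG (t s : ℝ) : ℝ := if t ≤ s then t * (1 - s) else s * (1 - t)

/-- The integral operator `(Fx)(t) = ∫₀¹ G(t,s) f(s, x(s)) ds`. -/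
def Fop (f : ℝ → ℝ → ℝ) (x : ℝ → ℝ) (t : ℝ) : ℝ :=
  ∫ s in (0:ℝ)..1, GreenG t s * f s (x s)

lemma greenG_cont : Continuous fun p : ℝ × ℝ => GreenG p.1 p.2 := by
  unfold GreenG
  exact Continuous.if_le (by continuity) (by continuity) continuous_fst continuous_snd
    (fun p h => by rw [h])

lemma greenG_nonneg {t s : ℝ} (ht : t ∈ Icc (0:ℝ) 1) (hs : s ∈ Icc (0:ℝ) 1) :
    0 ≤ GreenG t s := by
  obtain ⟨h1, h2⟩ := ht; obtain ⟨h3, h4⟩ := hs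
  unfold GreenG; split <;> nlinarith

lemma greenG_le {t s : ℝ} (ht : t ∈ Icc (0:ℝ) 1) (hs : s ∈ Icc (0:ℝ) 1) :
    GreenG t s ≤ 1 / 4 := by
  obtain ⟨h1, h2⟩ := ht; obtain ⟨h3, h4⟩ := hs
  unfold GreenG
  split <;> rename_i h <;>
    nlinarith [sq_nonneg (t + s - 1), sq_nonneg (t - s), sq_nonneg (2*t - 1), sq_nonneg (2*s - 1)]

lemma green_bound {t : ℝ} (ht : t ∈ Icc (0:ℝ) 1) {h : ℝ → ℝ} {M : ℝ}
    (hM : ∀ s ∈ Icc (0:ℝ) 1, |h s| ≤ M) :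
    |∫ s in (0:ℝ)..1, GreenG t s * h s| ≤ M / 4 := by
  have hM0 : 0 ≤ M := le_trans (abs_nonneg _) (hM 0 (by norm_num))
  have key := intervalIntegral.norm_integral_le_of_norm_le_const (a := (0:ℝ)) (b := 1)
    (C := M / 4) (f := fun s => GreenG t s * h s) ?_
  · rw [Real.norm_eq_abs] at key
    calc |∫ s in (0:ℝ)..1, GreenG t s * h s| ≤ M / 4 * |1 - 0| := key
    _ = M / 4 := by norm_num
  · intro s hs
    have hs' : s ∈ Icc (0:ℝ) 1 := by
      rw [Set.uIoc_of_le (by norm_num : (0:ℝ) ≤ 1)] at hs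
      exact Ioc_subset_Icc_self hs
    rw [Real.norm_eq_abs, abs_mul, abs_of_nonneg (greenG_nonneg ht hs')]
    calc GreenG t s * |h s| ≤ 1 / 4 * M :=
          mul_le_mul (greenG_le ht hs') (hM s hs') (abs_nonneg _) (by norm_num)
    _ = M / 4 := by ring

/-- under assumptions (i)-(iv), the two-point boundary value problem
`-x'' = f(t,x(t))`, `x(0) = x(1) = 0` has a solution; equivalently the integral operator
`Fop f` has a fixed point in `C([0,1])`. -/
theorem bvp_has_solution (f : ℝ → ℝ → ℝ)
    (hf : ContinuousOn (fun p : ℝ × ℝ => f p.1 p.2) (Set.Icc (0:ℝ) 1 ×ˢ Set.univ))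
    (φ : ℝ → ℝ → ℝ)
    (h1 : ∀ t ∈ Set.Icc (0:ℝ) 1, ∀ a b : ℝ, 0 ≤ φ a b → |f t a - f t b| ≤ |a - b|)
    (h2 : ∃ x₀ : ℝ → ℝ, ContinuousOn x₀ (Set.Icc (0:ℝ) 1) ∧
      ∀ t ∈ Set.Icc (0:ℝ) 1, 0 ≤ φ (x₀ t) (Fop f x₀ t))
    (h3 : ∀ x y : ℝ → ℝ, ContinuousOn x (Set.Icc (0:ℝ) 1) →
      ContinuousOn y (Set.Icc (0:ℝ) 1) →
      (∀ t ∈ Set.Icc (0:ℝ) 1, 0 ≤ φ (x t) (y t)) →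
      ∀ t ∈ Set.Icc (0:ℝ) 1, 0 ≤ φ (Fop f x t) (Fop f y t))
    (h4 : ∀ u : ℕ → ℝ → ℝ, ∀ x : ℝ → ℝ,
      (∀ n, ContinuousOn (u n) (Set.Icc (0:ℝ) 1)) →
      ContinuousOn x (Set.Icc (0:ℝ) 1) →
      TendstoUniformlyOn u x Filter.atTop (Set.Icc (0:ℝ) 1) →
      (∀ n, ∀ t ∈ Set.Icc (0:ℝ) 1, 0 ≤ φ (u n t) (u (n + 1) t)) →
      ∀ n, ∀ t ∈ Set.Icc (0:ℝ) 1, 0 ≤ φ (u n t) (x t)) :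
    ∃ x : ℝ → ℝ, ContinuousOn x (Set.Icc (0:ℝ) 1) ∧
      ∀ t ∈ Set.Icc (0:ℝ) 1, Fop f x t = x t := by
  classical
  obtain ⟨x₀, hx₀c, hx₀φ⟩ := h2
  -- the projection onto [0,1]
  set π : ℝ → ℝ := fun t => max 0 (min 1 t) with hπdef
  have hπc : Continuous π := continuous_const.max (continuous_const.min continuous_id)
  have hπmem : ∀ t, π t ∈ Icc (0:ℝ) 1 :=
    fun t => ⟨le_max_left _ _, max_le (by norm_num) (min_le_left _ _)⟩
  have hπeq : ∀ t ∈ Icc (0:ℝ) 1, π t = t := by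
    rintro t ⟨ht0, ht1⟩
    simp only [hπdef]
    rw [min_eq_right ht1, max_eq_right ht0]
  -- extended nonlinearity
  set g : ℝ → ℝ → ℝ := fun s a => f (π s) a with hgdef
  have hgc : Continuous fun p : ℝ × ℝ => g p.1 p.2 := by
    apply hf.comp_continuous ((hπc.comp continuous_fst).prodMk continuous_snd)
    exact fun p => ⟨hπmem _, mem_univ _⟩
  -- extended operator
  set K : (ℝ → ℝ) → ℝ → ℝ := fun y t => ∫ s in (0:ℝ)..1, GreenG t s * g s (y s) with hKdef
  have hKc : ∀ y : ℝ → ℝ, Continuous y → Continuous (K y) := by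
    intro y hy
    apply intervalIntegral.continuous_parametric_intervalIntegral_of_continuous'
      (f := fun t s => GreenG t s * g s (y s))
    exact (greenG_cont).mul
      (hgc.comp ((continuous_snd).prodMk (hy.comp continuous_snd)))
  have hKF : ∀ (y : ℝ → ℝ) (t : ℝ), K y t = Fop f y t := by
    intro y t
    apply intervalIntegral.integral_congr
    intro s hs
    rw [Set.uIcc_of_le (by norm_num : (0:ℝ) ≤ 1)] at hs
    simp only [hgdef]
    rw [hπeq s hs]
  -- the iteration
  set u : ℕ → ℝ → ℝ := fun n => K^[n] (x₀ ∘ π) with hudef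
  have hu_succ : ∀ n, u (n + 1) = K (u n) := by
    intro n; simp only [hudef]; rw [Function.iterate_succ_apply']
  have huc : ∀ n, Continuous (u n) := by
    intro n
    induction n with
    | zero => exact hx₀c.comp_continuous hπc hπmem
    | succ n ih => rw [hu_succ]; exact hKc _ ih
  have hFu : ∀ (n : ℕ) (t : ℝ), Fop f (u n) t = u (n + 1) t := by
    intro n t; rw [hu_succ, ← hKF]
  have hu0 : ∀ t ∈ Icc (0:ℝ) 1, u 0 t = x₀ t := by
    intro t ht
    simp only [hudef, Function.iterate_zero, id_eq, Function.comp_apply, hπeq t ht]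
  have hu0int : ∀ t : ℝ, Fop f (u 0) t = Fop f x₀ t := by
    intro t
    apply intervalIntegral.integral_congr
    intro s hs
    rw [Set.uIcc_of_le (by norm_num : (0:ℝ) ≤ 1)] at hs
    show GreenG t s * f s (u 0 s) = GreenG t s * f s (x₀ s)
    rw [hu0 s hs]
  -- the comparability chain
  have Q : ∀ n, ∀ t ∈ Icc (0:ℝ) 1, 0 ≤ φ (u n t) (u (n + 1) t) := by
    intro n
    induction n with
    | zero =>
      intro t ht
      rw [hu0 t ht, ← hFu 0 t, hu0int t]
      exact hx₀φ t ht
    | succ n ih =>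
      intro t ht
      have := h3 (u n) (u (n + 1)) (huc n).continuousOn (huc (n + 1)).continuousOn ih t ht
      rwa [hFu n t, hFu (n + 1) t] at this
  -- contraction-type estimate
  have hdiff : ∀ x y : ℝ → ℝ, ContinuousOn x (Icc (0:ℝ) 1) → ContinuousOn y (Icc (0:ℝ) 1) →
      (∀ s ∈ Icc (0:ℝ) 1, 0 ≤ φ (x s) (y s)) → ∀ M : ℝ, (∀ s ∈ Icc (0:ℝ) 1, |x s - y s| ≤ M) →
      ∀ t ∈ Icc (0:ℝ) 1, |Fop f x t - Fop f y t| ≤ M / 4 := by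
    intro x y hx hy hφ M hM t ht
    have hGt : ContinuousOn (fun s => GreenG t s) (Icc (0:ℝ) 1) :=
      (greenG_cont.comp (continuous_const.prodMk continuous_id)).continuousOn
    have hix : IntervalIntegrable (fun s => GreenG t s * f s (x s)) volume 0 1 := by
      apply ContinuousOn.intervalIntegrable
      rw [Set.uIcc_of_le (by norm_num : (0:ℝ) ≤ 1)]
      exact hGt.mul (hf.comp (continuousOn_id.prodMk hx) (fun s hs => ⟨hs, mem_univ _⟩))
    have hiy : IntervalIntegrable (fun s => GreenG t s * f s (y s)) volume 0 1 := by
      apply ContinuousOn.intervalIntegrable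
      rw [Set.uIcc_of_le (by norm_num : (0:ℝ) ≤ 1)]
      exact hGt.mul (hf.comp (continuousOn_id.prodMk hy) (fun s hs => ⟨hs, mem_univ _⟩))
    have heq : Fop f x t - Fop f y t
        = ∫ s in (0:ℝ)..1, GreenG t s * (f s (x s) - f s (y s)) := by
      rw [Fop, Fop, ← intervalIntegral.integral_sub hix hiy]
      congr 1; ext s; ring
    rw [heq]
    apply green_bound ht
    intro s hs
    calc |f s (x s) - f s (y s)| ≤ |x s - y s| := h1 s hs _ _ (hφ s hs)
    _ ≤ M := hM s hs
  -- bound on the first difference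
  obtain ⟨B, hB⟩ := (isCompact_Icc (a := (0:ℝ)) (b := 1)).exists_bound_of_continuousOn
    ((huc 1).continuousOn.sub (huc 0).continuousOn)
  have hB' : ∀ s ∈ Icc (0:ℝ) 1, |u 1 s - u 0 s| ≤ B := by
    intro s hs; simpa [Real.norm_eq_abs] using hB s hs
  have hB0 : 0 ≤ B := le_trans (abs_nonneg _) (hB' 0 (by norm_num))
  -- geometric estimate on successive differences
  have P : ∀ n, ∀ s ∈ Icc (0:ℝ) 1, |u (n + 1) s - u n s| ≤ B * (1/4) ^ n := by
    intro n
    induction n with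
    | zero => intro s hs; simpa using hB' s hs
    | succ n ih =>
      intro s hs
      have hφ' : ∀ r ∈ Icc (0:ℝ) 1, 0 ≤ φ (u n r) (u (n + 1) r) := Q n
      have hM' : ∀ r ∈ Icc (0:ℝ) 1, |u n r - u (n + 1) r| ≤ B * (1/4) ^ n := by
        intro r hr; rw [abs_sub_comm]; exact ih r hr
      have key := hdiff (u n) (u (n + 1)) (huc n).continuousOn (huc (n + 1)).continuousOn
        hφ' (B * (1/4) ^ n) hM' s hs
      rw [hFu n s, hFu (n + 1) s, abs_sub_comm] at key
      calc |u (n + 1 + 1) s - u (n + 1) s| ≤ B * (1/4) ^ n / 4 := key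
      _ = B * (1/4) ^ (n + 1) := by ring
  -- Cauchy sequence pointwise
  have hdist : ∀ t ∈ Icc (0:ℝ) 1, ∀ n, dist (u n t) (u (n + 1) t) ≤ B * (1/4) ^ n := by
    intro t ht n
    rw [Real.dist_eq, abs_sub_comm]
    exact P n t ht
  have hlim : ∀ t ∈ Icc (0:ℝ) 1, ∃ l, Tendsto (fun n => u n t) atTop (𝓝 l) := by
    intro t ht
    exact cauchySeq_tendsto_of_complete
      (cauchySeq_of_le_geometric (1/4) B (by norm_num) (hdist t ht))
  set x : ℝ → ℝ := fun t => limUnder atTop (fun n => u n t) with hxdef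
  have hxl : ∀ t ∈ Icc (0:ℝ) 1, Tendsto (fun n => u n t) atTop (𝓝 (x t)) := by
    intro t ht
    obtain ⟨l, hl⟩ := hlim t ht
    have : x t = l := hl.limUnder_eq
    rwa [this]
  have hD : ∀ t ∈ Icc (0:ℝ) 1, ∀ n, dist (u n t) (x t) ≤ B * (1/4) ^ n / (1 - 1/4) :=
    fun t ht n => dist_le_of_le_geometric_of_tendsto (1/4) B (by norm_num)
      (hdist t ht) (hxl t ht) n
  have hDto : Tendsto (fun n : ℕ => B * (1/4) ^ n / (1 - 1/4)) atTop (𝓝 0) := by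
    have h0 : Tendsto (fun n : ℕ => ((1:ℝ)/4) ^ n) atTop (𝓝 0) :=
      tendsto_pow_atTop_nhds_zero_of_lt_one (by norm_num) (by norm_num)
    have := (h0.const_mul B).div_const (1 - 1/4)
    simpa using this
  -- uniform convergence
  have hTU : TendstoUniformlyOn u x atTop (Icc (0:ℝ) 1) := by
    rw [Metric.tendstoUniformlyOn_iff]
    intro ε hε
    filter_upwards [hDto.eventually (gt_mem_nhds hε)] with n hn t ht
    calc dist (x t) (u n t) = dist (u n t) (x t) := dist_comm _ _
    _ ≤ B * (1/4) ^ n / (1 - 1/4) := hD t ht n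
    _ < ε := hn
  have hxc : ContinuousOn x (Icc (0:ℝ) 1) :=
    hTU.continuousOn (Filter.Eventually.of_forall fun n => (huc n).continuousOn).frequently
  have hφx : ∀ n, ∀ t ∈ Icc (0:ℝ) 1, 0 ≤ φ (u n t) (x t) :=
    h4 u x (fun n => (huc n).continuousOn) hxc hTU Q
  refine ⟨x, hxc, ?_⟩
  intro t ht
  have key : ∀ n : ℕ, |Fop f x t - x t| ≤ 2 * (B * (1/4) ^ n / (1 - 1/4)) := by
    intro n
    set D : ℝ := B * (1/4) ^ n / (1 - 1/4) with hDdef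
    have hD0 : 0 ≤ D := by positivity
    have first : |Fop f (u n) t - Fop f x t| ≤ D / 4 := by
      apply hdiff (u n) x (huc n).continuousOn hxc (hφx n) D _ t ht
      intro s hs
      rw [← Real.dist_eq]
      exact hD s hs n
    have second : |Fop f (u n) t - x t| ≤ D := by
      rw [hFu n t, ← Real.dist_eq]
      calc dist (u (n + 1) t) (x t) ≤ B * (1/4) ^ (n + 1) / (1 - 1/4) := hD t ht (n + 1)
      _ ≤ D := by
          have hp : ((1:ℝ)/4) ^ (n + 1) ≤ (1/4) ^ n := by
            rw [pow_succ]
            nlinarith [pow_nonneg (by norm_num : (0:ℝ) ≤ 1/4) n]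
          have h' := mul_le_mul_of_nonneg_left hp hB0
          rw [hDdef]
          gcongr
    calc |Fop f x t - x t|
        ≤ |Fop f x t - Fop f (u n) t| + |Fop f (u n) t - x t| := abs_sub_le _ _ _
    _ = |Fop f (u n) t - Fop f x t| + |Fop f (u n) t - x t| := by rw [abs_sub_comm]
    _ ≤ D / 4 + D := add_le_add first second
    _ ≤ 2 * D := by linarith
  have hle : |Fop f x t - x t| ≤ 0 := by
    have h2to : Tendsto (fun n : ℕ => 2 * (B * (1/4) ^ n / (1 - 1/4))) atTop (𝓝 0) := by
      simpa using hDto.const_mul 2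
    exact ge_of_tendsto' h2to key
  have : Fop f x t - x t = 0 := abs_eq_zero.mp (le_antisymm hle (abs_nonneg _))
  linarith
end
end

section
/- Let (X,d) be a metric space, let Θ : (0,∞) → (1,∞) be nondecreasing and satisfy: for every sequence (αₙ) of positive reals, Θ(αₙ) → 1 iff αₙ → 0, and there exist r ∈ (0,1) and l ∈ (0,∞] with lim_{t→0⁺} (Θ(t)−1)/tʳ = l. Let k ∈ (0,1) and let (xₙ) be a sequence in X such that for all n with d(xₙ,xₙ₊₁) > 0, Θ(d(xₙ,xₙ₊₁)) ≤ [Θ(d(x₀,x₁))]^(kⁿ). Then lim_{n→∞} n·[d(xₙ,xₙ₊₁)]ʳ = 0 and (xₙ) is a Cauchy sequence in X. -/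
open Filter Topology Metric Set

noncomputable section

/-- key Cauchy-sequence estimate. If `Θ : (0,∞) → (1,∞)` is nondecreasing,
satisfies `Θ(αₙ) → 1 ↔ αₙ → 0` for positive sequences, and
`lim_{t→0⁺} (Θ(t)-1)/tʳ = l ∈ (0,∞]` for some `r ∈ (0,1)`, and if a sequence `(xₙ)`
satisfies `Θ(d(xₙ,xₙ₊₁)) ≤ [Θ(d(x₀,x₁))]^(kⁿ)` whenever `d(xₙ,xₙ₊₁) > 0`, where
`k ∈ (0,1)`, then `n·[d(xₙ,xₙ₊₁)]ʳ → 0` and `(xₙ)` is Cauchy. -/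
theorem theta_decay_cauchy {X : Type*} [MetricSpace X] (Θ : ℝ → ℝ)
    (hmono : ∀ s t : ℝ, 0 < s → s ≤ t → Θ s ≤ Θ t)
    (hrange : ∀ t : ℝ, 0 < t → 1 < Θ t)
    (hlim : ∀ u : ℕ → ℝ, (∀ n, 0 < u n) →
      (Filter.Tendsto (fun n => Θ (u n)) Filter.atTop (nhds 1) ↔
        Filter.Tendsto u Filter.atTop (nhds 0)))
    (r : ℝ) (hr0 : 0 < r) (hr1 : r < 1)
    (hΘ3 : (∃ l : ℝ, 0 < l ∧ Filter.Tendsto (fun t => (Θ t - 1) / t ^ r)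
        (nhdsWithin 0 (Set.Ioi 0)) (nhds l)) ∨
      Filter.Tendsto (fun t => (Θ t - 1) / t ^ r)
        (nhdsWithin 0 (Set.Ioi 0)) Filter.atTop)
    (k : ℝ) (hk0 : 0 < k) (hk1 : k < 1)
    (x : ℕ → X)
    (hx : ∀ n : ℕ, 0 < dist (x n) (x (n + 1)) →
      Θ (dist (x n) (x (n + 1))) ≤ Θ (dist (x 0) (x 1)) ^ (k ^ n)) :
    Filter.Tendsto (fun n : ℕ => (n : ℝ) * dist (x n) (x (n + 1)) ^ r)
      Filter.atTop (nhds 0) ∧ CauchySeq x := by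
  set d : ℕ → ℝ := fun n => dist (x n) (x (n + 1)) with hd
  have hdnn : ∀ n, 0 ≤ d n := fun n => dist_nonneg
  -- It suffices to prove the tendsto statement and summability of d
  suffices h : Filter.Tendsto (fun n : ℕ => (n : ℝ) * d n ^ r) Filter.atTop (nhds 0)
      ∧ Summable d by
    exact ⟨h.1, cauchySeq_of_summable_dist h.2⟩
  by_cases hC0 : Θ (dist (x 0) (x 1)) = 0
  · -- degenerate case : all increments vanish
    have hzero : ∀ n, d n = 0 := by
      intro n
      by_contra h
      have hpos : 0 < d n := lt_of_le_of_ne (hdnn n) (Ne.symm h)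
      have h2 := hx n hpos
      rw [hC0, Real.zero_rpow (pow_ne_zero n (ne_of_gt hk0))] at h2
      have := hrange _ hpos
      linarith
    constructor
    · have : (fun n : ℕ => (n : ℝ) * d n ^ r) = fun _ => 0 := by
        funext n; rw [hzero n, Real.zero_rpow (ne_of_gt hr0), mul_zero]
      rw [this]; exact tendsto_const_nhds
    · have : d = fun _ => 0 := funext hzero
      rw [this]; exact summable_zero
  · set B : ℝ := |Θ (dist (x 0) (x 1))| with hBdef
    have hB : 0 < B := abs_pos.mpr hC0
    have key : ∀ n, 0 < d n → Θ (d n) ≤ B ^ (k ^ n) := by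
      intro n hn
      refine (hx n hn).trans ?_
      calc Θ (dist (x 0) (x 1)) ^ (k ^ n)
          ≤ |Θ (dist (x 0) (x 1)) ^ (k ^ n)| := le_abs_self _
        _ ≤ B ^ (k ^ n) := Real.abs_rpow_le_abs_rpow _ _
    have hkn : Filter.Tendsto (fun n : ℕ => k ^ n) atTop (nhds 0) :=
      tendsto_pow_atTop_nhds_zero_of_lt_one hk0.le hk1
    have hBlim : Filter.Tendsto (fun n : ℕ => B ^ (k ^ n)) atTop (nhds 1) := by
      have hc : ContinuousAt (fun y : ℝ => B ^ y) 0 :=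
        Real.continuousAt_const_rpow hB.ne'
      have := hc.tendsto.comp hkn
      simpa [Function.comp_def, Real.rpow_zero] using this
    have hsmallpos : ∀ n : ℕ, (0:ℝ) < 1 / ((n:ℝ) + 1) := by
      intro n; positivity
    have hΘsmall : Filter.Tendsto (fun n : ℕ => Θ (1 / ((n:ℝ) + 1))) atTop (nhds 1) :=
      (hlim _ hsmallpos).mpr tendsto_one_div_add_atTop_nhds_zero_nat
    set u : ℕ → ℝ := fun n => max (d n) (1 / ((n:ℝ) + 1)) with hu
    have hupos : ∀ n, 0 < u n := fun n => lt_max_of_lt_right (hsmallpos n)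
    have hΘu : ∀ n, Θ (u n) ≤ max (B ^ (k ^ n)) (Θ (1 / ((n:ℝ) + 1))) := by
      intro n
      rcases le_or_gt (d n) (1 / ((n:ℝ) + 1)) with h | h
      · rw [show u n = 1 / ((n:ℝ) + 1) from max_eq_right h]
        exact le_max_right _ _
      · have hdn : 0 < d n := (hsmallpos n).trans h
        rw [show u n = d n from max_eq_left h.le]
        exact le_max_of_le_left (key n hdn)
    have hmax : Filter.Tendsto
        (fun n : ℕ => max (B ^ (k ^ n)) (Θ (1 / ((n:ℝ) + 1)))) atTop (nhds 1) := by
      have := hBlim.max hΘsmall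
      simpa using this
    have hΘu1 : Filter.Tendsto (fun n => Θ (u n)) atTop (nhds 1) :=
      tendsto_of_tendsto_of_tendsto_of_le_of_le tendsto_const_nhds hmax
        (fun n => (hrange _ (hupos n)).le) hΘu
    have hu0 : Filter.Tendsto u atTop (nhds 0) := (hlim u hupos).mp hΘu1
    have hd0 : Filter.Tendsto d atTop (nhds 0) :=
      squeeze_zero hdnn (fun n => le_max_left _ _) hu0
    -- extract the lower estimate from hΘ3
    obtain ⟨c, hc, hev⟩ : ∃ c : ℝ, 0 < c ∧
        ∀ᶠ t in nhdsWithin 0 (Set.Ioi 0), c ≤ (Θ t - 1) / t ^ r := by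
      rcases hΘ3 with ⟨l, hl, hl'⟩ | h
      · exact ⟨l / 2, half_pos hl, hl'.eventually (eventually_ge_nhds (half_lt_self hl))⟩
      · exact ⟨1, one_pos, h.eventually_ge_atTop 1⟩
    rw [eventually_nhdsWithin_iff, Metric.eventually_nhds_iff] at hev
    obtain ⟨δ, hδ, hball⟩ := hev
    have hlow : ∀ t : ℝ, 0 < t → t < δ → c * t ^ r ≤ Θ t - 1 := by
      intro t ht htδ
      have h1 : dist t 0 < δ := by
        rw [Real.dist_eq, sub_zero, abs_of_pos ht]; exact htδ
      have h2 := hball h1 ht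
      have h3 : (0:ℝ) < t ^ r := Real.rpow_pos_of_pos ht r
      calc c * t ^ r ≤ ((Θ t - 1) / t ^ r) * t ^ r := by
            exact mul_le_mul_of_nonneg_right h2 h3.le
        _ = Θ t - 1 := by field_simp
    -- the geometric-type majorant
    set L : ℝ := max (Real.log B) 0 with hL
    have hLnn : 0 ≤ L := le_max_right _ _
    have hmaj : ∀ n : ℕ, max (B ^ (k ^ n) - 1) 0 ≤ (L * Real.exp L) * k ^ n := by
      intro n
      have hknpos : 0 < k ^ n := pow_pos hk0 n
      have hkn1 : k ^ n ≤ 1 := pow_le_one₀ hk0.le hk1.le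
      have h1 : B ^ (k ^ n) = Real.exp (Real.log B * k ^ n) := by
        rw [Real.rpow_def_of_pos hB]
      have h2 : Real.log B * k ^ n ≤ L * k ^ n :=
        mul_le_mul_of_nonneg_right (le_max_left _ _) hknpos.le
      have h3 : L * k ^ n ≤ L := by
        nlinarith
      have h4 : Real.exp (L * k ^ n) - 1 ≤ (L * k ^ n) * Real.exp (L * k ^ n) := by
        have := Real.add_one_le_exp (-(L * k ^ n))
        have hexp : 0 < Real.exp (L * k ^ n) := Real.exp_pos _
        have h5 : Real.exp (-(L * k ^ n)) = (Real.exp (L * k ^ n))⁻¹ := Real.exp_neg _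
        rw [h5] at this
        have h6 := mul_le_mul_of_nonneg_right this hexp.le
        rw [inv_mul_cancel₀ hexp.ne'] at h6
        nlinarith
      have h7 : Real.exp (L * k ^ n) ≤ Real.exp L := Real.exp_le_exp.mpr h3
      have h8 : B ^ (k ^ n) - 1 ≤ (L * Real.exp L) * k ^ n := by
        rw [h1]
        have h9 : Real.exp (Real.log B * k ^ n) ≤ Real.exp (L * k ^ n) :=
          Real.exp_le_exp.mpr h2
        have h11 : (L * k ^ n) * Real.exp (L * k ^ n) ≤ (L * k ^ n) * Real.exp L :=
          mul_le_mul_of_nonneg_left h7 (mul_nonneg hLnn hknpos.le)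
        nlinarith
      have h10 : (0:ℝ) ≤ (L * Real.exp L) * k ^ n := by positivity
      exact max_le h8 h10
    have hineq : ∀ n : ℕ, ((n:ℝ) / c) * max (B ^ (k ^ n) - 1) 0
        ≤ (L * Real.exp L / c) * ((n:ℝ) * k ^ n) := by
      intro n
      calc ((n:ℝ) / c) * max (B ^ (k ^ n) - 1) 0
          ≤ ((n:ℝ) / c) * ((L * Real.exp L) * k ^ n) :=
            mul_le_mul_of_nonneg_left (hmaj n) (by positivity)
        _ = (L * Real.exp L / c) * ((n:ℝ) * k ^ n) := by ring
    have hrhs : Filter.Tendsto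
        (fun n : ℕ => ((n:ℝ) / c) * max (B ^ (k ^ n) - 1) 0) atTop (nhds 0) := by
      have htend := (tendsto_self_mul_const_pow_of_lt_one hk0.le hk1).const_mul
        (L * Real.exp L / c)
      refine squeeze_zero' (Filter.Eventually.of_forall (fun n => by positivity))
        (Filter.Eventually.of_forall hineq) ?_
      simpa using htend
    have hbound : ∀ᶠ n : ℕ in atTop,
        (n:ℝ) * d n ^ r ≤ ((n:ℝ) / c) * max (B ^ (k ^ n) - 1) 0 := by
      filter_upwards [hd0.eventually (eventually_lt_nhds hδ)] with n hn
      rcases eq_or_lt_of_le (hdnn n) with h | h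
      · rw [← h, Real.zero_rpow (ne_of_gt hr0), mul_zero]
        positivity
      · have h1 : c * d n ^ r ≤ Θ (d n) - 1 := hlow _ h hn
        have h2 : Θ (d n) ≤ B ^ (k ^ n) := key n h
        have h3 : c * d n ^ r ≤ max (B ^ (k ^ n) - 1) 0 :=
          le_max_of_le_left (by linarith)
        have h4 : d n ^ r ≤ max (B ^ (k ^ n) - 1) 0 / c := (le_div_iff₀' hc).mpr h3
        calc (n:ℝ) * d n ^ r ≤ (n:ℝ) * (max (B ^ (k ^ n) - 1) 0 / c) :=
              mul_le_mul_of_nonneg_left h4 (Nat.cast_nonneg n)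
          _ = ((n:ℝ) / c) * max (B ^ (k ^ n) - 1) 0 := by ring
    have part1 : Filter.Tendsto (fun n : ℕ => (n:ℝ) * d n ^ r) atTop (nhds 0) :=
      squeeze_zero' (Filter.Eventually.of_forall (fun n => by positivity)) hbound hrhs
    refine ⟨part1, ?_⟩
    -- summability
    obtain ⟨N, hN⟩ := Filter.eventually_atTop.mp
      (part1.eventually (eventually_le_nhds (by norm_num : (0:ℝ) < 1)))
    set N' : ℕ := N + 1 with hN'
    have hexp1 : -(r⁻¹) < -1 := by
      have : 1 < r⁻¹ := (one_lt_inv₀ hr0).mpr hr1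
      linarith
    have hsum0 : Summable (fun n : ℕ => (n : ℝ) ^ (-(r⁻¹))) :=
      Real.summable_nat_rpow.mpr hexp1
    have hsum' : Summable (fun n : ℕ => ((n + N' : ℕ) : ℝ) ^ (-(r⁻¹))) :=
      (summable_nat_add_iff (f := fun n : ℕ => (n : ℝ) ^ (-(r⁻¹))) N').mpr hsum0
    have hcomp : ∀ n : ℕ, d (n + N') ≤ ((n + N' : ℕ) : ℝ) ^ (-(r⁻¹)) := by
      intro n
      set m : ℕ := n + N' with hm
      have hmN : N ≤ m := by omega
      have hm1 : (1:ℝ) ≤ (m:ℝ) := by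
        have : 1 ≤ m := by omega
        exact_mod_cast this
      have hmpos : (0:ℝ) < (m:ℝ) := by linarith
      have h1 : (m:ℝ) * d m ^ r ≤ 1 := hN m hmN
      have h2 : d m ^ r ≤ (m:ℝ)⁻¹ := by
        rw [← mul_le_mul_iff_right₀ hmpos, mul_inv_cancel₀ hmpos.ne']
        exact h1
      have h3 : d m = (d m ^ r) ^ r⁻¹ := by
        rw [← Real.rpow_mul (hdnn m), mul_inv_cancel₀ hr0.ne', Real.rpow_one]
      calc d m = (d m ^ r) ^ r⁻¹ := h3
        _ ≤ ((m:ℝ)⁻¹) ^ r⁻¹ :=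
            Real.rpow_le_rpow (Real.rpow_nonneg (hdnn m) r) h2 (inv_nonneg.mpr hr0.le)
        _ = (m:ℝ) ^ (-(r⁻¹)) := by
            rw [Real.inv_rpow (Nat.cast_nonneg m), ← Real.rpow_neg (Nat.cast_nonneg m)]
    have hsumshift : Summable (fun n : ℕ => d (n + N')) :=
      Summable.of_nonneg_of_le (fun n => hdnn _) hcomp hsum'
    exact (summable_nat_add_iff N').mp hsumshift
end
end
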